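/- arXiv:2401.00333 — 4 statements merged into one kernel-verified Lean document; each statement's English description precedes it below -/
import Mathlib

section
/- Let q = 2^(2m) with m ≥ 2, and let ρ ∈ F_q^*. Then the number of γ ∈ F_q with Tr(γ^3/ρ + 1) = 1 equals q/2 + (-1)^m √q if ρ is a cube in F_q, and q/2 - (-1)^m (√q)/2 if ρ is a non-cube in F_q. -/
set_option linter.unusedSectionVars false
set_option maxHeartbeats 1600000

open Finset

namespace Stmt7

variable {F : Type*} [Field F] [Fintype F] [Algebra (ZMod 2) F] [DecidableEq F]

lemma two_eq_zero : (2 : F) = 0 := by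
  have h : algebraMap (ZMod 2) F 2 = 2 := map_ofNat _ 2
  rw [show (2 : ZMod 2) = 0 by decide, map_zero] at h
  exact h.symm

lemma charP2 : CharP F 2 := by
  haveI := charP_of_injective_ringHom (algebraMap (ZMod 2) F).injective 2
  assumption

lemma trace_one_eq_zero (m : ℕ) (hcard : Fintype.card F = 2 ^ (2 * m)) :
    Algebra.trace (ZMod 2) F 1 = 0 := by
  haveI : Module.Finite (ZMod 2) F := Module.Finite.of_finite
  have h1 : Fintype.card F = Fintype.card (ZMod 2) ^ Module.finrank (ZMod 2) F :=
    Module.card_eq_pow_finrank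
  rw [ZMod.card, hcard] at h1
  have h2 : Module.finrank (ZMod 2) F = 2 * m :=
    (Nat.pow_right_injective le_rfl h1.symm)
  have h3 := Algebra.trace_algebraMap (R := ZMod 2) (S := F) 1
  rw [map_one] at h3
  rw [h3, h2, nsmul_eq_mul, mul_one, Nat.cast_mul, ZMod.natCast_self, zero_mul]

lemma trace_surj' : ∃ u : F, Algebra.trace (ZMod 2) F u ≠ 0 := by
  haveI : Module.Finite (ZMod 2) F := Module.Finite.of_finite
  have hnz := Algebra.trace_ne_zero (ZMod 2) F
  by_contra hall
  push_neg at hall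
  exact hnz (LinearMap.ext fun u => by simpa using hall u)

lemma trace_sq (x : F) : Algebra.trace (ZMod 2) F (x ^ 2) = Algebra.trace (ZMod 2) F x := by
  haveI := charP2 (F := F)
  let f : F →ₐ[ZMod 2] F :=
    { toRingHom := frobenius F 2
      commutes' := fun c => by
        show (algebraMap (ZMod 2) F c) ^ 2 = algebraMap (ZMod 2) F c
        rw [← map_pow]
        congr 1
        revert c; decide }
  have hbij : Function.Bijective f := by
    have : Function.Injective f := f.toRingHom.injective
    exact Finite.injective_iff_bijective.mp this
  let e : F ≃ₐ[ZMod 2] F := AlgEquiv.ofBijective f hbij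
  have := Algebra.trace_eq_of_algEquiv e x
  simpa [e, f, AlgEquiv.ofBijective, frobenius_def] using this

lemma omega_ne_zero {ω : F} (h3 : ω ^ 3 = 1) : ω ≠ 0 := by
  intro h; rw [h] at h3; simp at h3

lemma omega_rel {ω : F} (h1 : ω ≠ 1) (h3 : ω ^ 3 = 1) : ω ^ 2 + ω + 1 = 0 := by
  have hfac : (ω - 1) * (ω ^ 2 + ω + 1) = 0 := by linear_combination h3
  rcases mul_eq_zero.mp hfac with h | h
  · exact absurd (sub_eq_zero.mp h) h1
  · exact h

lemma cube_eq_iff {ω : F} (h1 : ω ≠ 1) (h3 : ω ^ 3 = 1) {u : F} (hu : u ^ 3 = 1) :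
    u = 1 ∨ u = ω ∨ u = ω ^ 2 := by
  have h2 : (2 : F) = 0 := two_eq_zero
  have hrel : ω ^ 2 + ω + 1 = 0 := omega_rel h1 h3
  have hprod : (u + 1) * (u + ω) * (u + ω ^ 2) = 0 := by
    linear_combination hu + (u ^ 2 + u) * hrel + (u + 1) * h3 + h2
  have hneg : ∀ z : F, z + z = 0 := fun z => by
    have : (2 : F) * z = 0 := by rw [h2, zero_mul]
    linear_combination this
  rcases mul_eq_zero.mp hprod with h | h
  · rcases mul_eq_zero.mp h with h | h
    · left; have := hneg 1; linear_combination h - this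
    · right; left; linear_combination h - hneg ω
  · right; right; linear_combination h - hneg (ω ^ 2)

lemma card_cube_roots {ω : F} (h1 : ω ≠ 1) (h3 : ω ^ 3 = 1) {y x0 : F} (hx0 : x0 ≠ 0)
    (hy : x0 ^ 3 = y) :
    (univ.filter fun x : F => x ^ 3 = y).card = 3 := by
  have hω0 : ω ≠ 0 := omega_ne_zero h3
  have hω2ne1 : ω ^ 2 ≠ 1 := by
    intro h
    apply h1
    rw [pow_succ, h, one_mul] at h3
    exact h3
  have hωω2 : ω ≠ ω ^ 2 := by
    intro h
    apply h1
    have := mul_left_cancel₀ hω0 (show ω * 1 = ω * ω by rw [mul_one, ← pow_two, ← h])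
    exact this.symm
  have hset : (univ.filter fun x : F => x ^ 3 = y) = {x0, ω * x0, ω ^ 2 * x0} := by
    ext x
    simp only [mem_filter, mem_univ, true_and, mem_insert, mem_singleton]
    constructor
    · intro hx
      have hu : (x / x0) ^ 3 = 1 := by
        rw [div_pow, hx, ← hy, div_self (pow_ne_zero 3 hx0)]
      rcases cube_eq_iff h1 h3 hu with h | h | h
      · left; rw [div_eq_iff hx0, one_mul] at h; exact h
      · right; left; rw [div_eq_iff hx0] at h; exact h
      · right; right; rw [div_eq_iff hx0] at h; exact h
    · rintro (rfl | rfl | rfl)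
      · exact hy
      · rw [mul_pow, h3, one_mul, hy]
      · rw [mul_pow, ← pow_mul, show 2 * 3 = 3 * 2 by ring, pow_mul, h3, one_pow, one_mul, hy]
  rw [hset]
  rw [card_insert_of_notMem, card_insert_of_notMem, card_singleton]
  · simp only [mem_singleton]
    intro h
    exact hωω2 (mul_right_cancel₀ hx0 (by rw [h]))
  · simp only [mem_insert, mem_singleton]
    push_neg
    constructor
    · intro h; exact h1 (by
        have := mul_right_cancel₀ hx0 (show ω * x0 = 1 * x0 by rw [one_mul, ← h])
        exact this)
    · intro h; exact hω2ne1 (by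
        have := mul_right_cancel₀ hx0 (show ω ^ 2 * x0 = 1 * x0 by rw [one_mul, ← h])
        exact this)

lemma three_to_one {ω : F} (h1 : ω ≠ 1) (h3 : ω ^ 3 = 1) (P : F → Prop) [DecidablePred P] :
    (univ.filter fun x : F => x ≠ 0 ∧ P (x ^ 3)).card
      = 3 * (univ.filter fun y : F => y ≠ 0 ∧ (∃ x, x ^ 3 = y) ∧ P y).card := by
  classical
  set s := univ.filter fun x : F => x ≠ 0 ∧ P (x ^ 3) with hs
  set t := univ.filter fun y : F => y ≠ 0 ∧ (∃ x, x ^ 3 = y) ∧ P y with ht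
  have hmap : ∀ x ∈ s, x ^ 3 ∈ t := by
    intro x hx
    rw [hs, mem_filter] at hx
    rw [ht, mem_filter]
    exact ⟨mem_univ _, pow_ne_zero 3 hx.2.1, ⟨x, rfl⟩, hx.2.2⟩
  rw [Finset.card_eq_sum_card_fiberwise hmap]
  have hfib : ∀ y ∈ t, (s.filter fun x => x ^ 3 = y).card = 3 := by
    intro y hy
    rw [ht, mem_filter] at hy
    obtain ⟨-, hy0, ⟨x0, hx0⟩, hPy⟩ := hy
    have hx00 : x0 ≠ 0 := by intro h; rw [h] at hx0; simp at hx0; exact hy0 hx0.symm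
    have : s.filter (fun x => x ^ 3 = y) = univ.filter fun x : F => x ^ 3 = y := by
      ext x
      simp only [hs, mem_filter, mem_univ, true_and]
      constructor
      · rintro ⟨-, h⟩; exact h
      · intro h
        refine ⟨⟨?_, ?_⟩, h⟩
        · intro hx; rw [hx] at h; simp at h; exact hy0 h.symm
        · rw [h]; exact hPy
    rw [this, card_cube_roots h1 h3 hx00 hx0]
  rw [Finset.sum_congr rfl hfib, Finset.sum_const, smul_eq_mul, mul_comm]

noncomputable def e (F : Type*) [Field F] [Algebra (ZMod 2) F] (u : F) : ℤ :=
  if Algebra.trace (ZMod 2) F u = 0 then 1 else -1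

lemma e_zero : e F 0 = 1 := by simp [e]

lemma e_add (u v : F) : e F (u + v) = e F u * e F v := by
  unfold e
  rw [map_add]
  generalize Algebra.trace (ZMod 2) F u = a
  generalize Algebra.trace (ZMod 2) F v = b
  revert a b
  decide

lemma sum_e (hs : ∃ u : F, Algebra.trace (ZMod 2) F u ≠ 0) : ∑ u : F, e F u = 0 := by
  obtain ⟨u0, hu0⟩ := hs
  have he : e F u0 = -1 := if_neg hu0
  have hb : Function.Bijective (fun u : F => u + u0) := (Equiv.addRight u0).bijective
  have h1 : ∑ u : F, e F (u + u0) = ∑ u : F, e F u :=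
    Function.Bijective.sum_comp hb (e F)
  have h2 : ∑ u : F, e F (u + u0) = (∑ u : F, e F u) * e F u0 := by
    rw [Finset.sum_mul]
    exact Finset.sum_congr rfl fun u _ => e_add u u0
  rw [h2, he] at h1
  linarith

lemma sum_e_mul (hs : ∃ u : F, Algebra.trace (ZMod 2) F u ≠ 0)
    (m : ℕ) (hcard : Fintype.card F = 2 ^ (2 * m)) (c : F) :
    ∑ a : F, e F (a * c) = if c = 0 then (2 ^ (2 * m) : ℤ) else 0 := by
  by_cases hc : c = 0
  · simp [hc, e_zero, card_univ, hcard]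
  · rw [if_neg hc]
    have hbij : Function.Bijective (fun a : F => a * c) :=
      (Equiv.mulRight₀ c hc).bijective
    rw [← sum_e (F := F) hs]
    exact Function.Bijective.sum_comp hbij (e F)

lemma first_moment (hs : ∃ u : F, Algebra.trace (ZMod 2) F u ≠ 0)
    (m : ℕ) (hcard : Fintype.card F = 2 ^ (2 * m)) :
    ∑ a : F, ∑ x : F, e F (a * x ^ 3) = (2 ^ (2 * m) : ℤ) := by
  rw [Finset.sum_comm]
  rw [Finset.sum_congr rfl (fun x _ => sum_e_mul hs m hcard (x ^ 3))]
  have hc : ∀ x : F, (x ^ 3 = 0) = (x = 0) := fun x =>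
    propext (pow_eq_zero_iff (three_ne_zero))
  simp only [hc]
  rw [Finset.sum_ite_eq' univ (0 : F) fun _ => (2 ^ (2 * m) : ℤ)]
  simp

lemma second_moment (hs : ∃ u : F, Algebra.trace (ZMod 2) F u ≠ 0)
    (m : ℕ) (hcard : Fintype.card F = 2 ^ (2 * m))
    {ω : F} (h1 : ω ≠ 1) (h3 : ω ^ 3 = 1) :
    ∑ a : F, (∑ x : F, e F (a * x ^ 3)) ^ 2
      = 2 ^ (2 * m) * (3 * 2 ^ (2 * m) - 2) := by
  have e2 : ∀ a : F, (∑ x : F, e F (a * x ^ 3)) ^ 2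
      = ∑ x : F, ∑ y : F, e F (a * (x ^ 3 + y ^ 3)) := by
    intro a
    rw [pow_two, Finset.sum_mul_sum]
    refine Finset.sum_congr rfl fun x _ => Finset.sum_congr rfl fun y _ => ?_
    rw [← e_add, mul_add]
  rw [Finset.sum_congr rfl fun a _ => e2 a, Finset.sum_comm]
  rw [Finset.sum_congr rfl fun x _ => Finset.sum_comm (γ := F)]
  have horth : ∀ x y : F, ∑ a : F, e F (a * (x ^ 3 + y ^ 3))
      = if y ^ 3 = x ^ 3 then (2 ^ (2 * m) : ℤ) else 0 := by
    intro x y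
    rw [sum_e_mul hs m hcard]
    have hcond : (x ^ 3 + y ^ 3 = 0) = (y ^ 3 = x ^ 3) := by
      apply propext
      constructor
      · intro h; linear_combination h - x ^ 3 * (two_eq_zero (F := F))
      · intro h; linear_combination h + x ^ 3 * (two_eq_zero (F := F))
    simp only [hcond]
  rw [Finset.sum_congr rfl fun x _ => Finset.sum_congr rfl fun y _ => horth x y]
  have hinner : ∀ x : F, ∑ y : F, (if y ^ 3 = x ^ 3 then (2 ^ (2 * m) : ℤ) else 0)
      = ((univ.filter fun y : F => y ^ 3 = x ^ 3).card : ℤ) * 2 ^ (2 * m) := by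
    intro x
    rw [← Finset.sum_filter, Finset.sum_const, nsmul_eq_mul]
  rw [Finset.sum_congr rfl fun x _ => hinner x]
  rw [← Finset.add_sum_erase univ _ (mem_univ (0 : F))]
  have hzero : ((univ.filter fun y : F => y ^ 3 = (0 : F) ^ 3).card : ℤ) = 1 := by
    have : (univ.filter fun y : F => y ^ 3 = (0 : F) ^ 3) = {0} := by
      ext y
      simp [pow_eq_zero_iff (three_ne_zero)]
    rw [this]; simp
  have hrest : ∀ x ∈ univ.erase (0 : F),
      ((univ.filter fun y : F => y ^ 3 = x ^ 3).card : ℤ) * 2 ^ (2 * m)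
        = 3 * 2 ^ (2 * m) := by
    intro x hx
    have hx0 : x ≠ 0 := (mem_erase.mp hx).1
    rw [card_cube_roots h1 h3 hx0 rfl]
    norm_num
  rw [Finset.sum_congr rfl hrest, Finset.sum_const, hzero, nsmul_eq_mul]
  rw [card_erase_of_mem (mem_univ _), card_univ, hcard]
  have h1le : (1 : ℕ) ≤ 2 ^ (2 * m) := Nat.one_le_two_pow
  push_cast [Nat.cast_sub h1le]
  ring

lemma e_sq (u : F) : e F (u ^ 2) = e F u := by
  unfold e; rw [trace_sq]

lemma sq_injective : Function.Injective (fun x : F => x ^ 2) := by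
  intro x y h
  simp only at h
  have h0 : (x - y) ^ 2 = 0 := by
    linear_combination h + (y ^ 2 - x * y) * (two_eq_zero (F := F))
  have := pow_eq_zero_iff (n := 2) (by norm_num) |>.mp h0
  exact sub_eq_zero.mp this

lemma S_mul_cube (b c : F) (hc : c ≠ 0) :
    ∑ x : F, e F (b * c ^ 3 * x ^ 3) = ∑ x : F, e F (b * x ^ 3) := by
  have hbij : Function.Bijective (fun x : F => c * x) := (Equiv.mulLeft₀ c hc).bijective
  rw [← Function.Bijective.sum_comp hbij (fun x => e F (b * x ^ 3))]
  refine Finset.sum_congr rfl fun x _ => ?_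
  show e F (b * c ^ 3 * x ^ 3) = e F (b * (c * x) ^ 3)
  congr 1
  ring

lemma S_frob (a : F) :
    ∑ x : F, e F (a ^ 2 * x ^ 3) = ∑ x : F, e F (a * x ^ 3) := by
  have hsq : Function.Bijective (fun x : F => x ^ 2) :=
    Finite.injective_iff_bijective.mp sq_injective
  rw [← Function.Bijective.sum_comp hsq (fun x => e F (a ^ 2 * x ^ 3))]
  refine Finset.sum_congr rfl fun w _ => ?_
  show e F (a ^ 2 * (w ^ 2) ^ 3) = e F (a * w ^ 3)
  have harg : a ^ 2 * (w ^ 2) ^ 3 = (a * w ^ 3) ^ 2 := by ring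
  rw [harg, e_sq]

lemma S_count (a : F) :
    ∑ x : F, e F (a * x ^ 3)
      = 2 * ((univ.filter fun x : F =>
          Algebra.trace (ZMod 2) F (a * x ^ 3) = 0).card : ℤ) - (Fintype.card F : ℤ) := by
  unfold e
  rw [Finset.sum_ite]
  rw [Finset.sum_const, Finset.sum_const]
  have hsplit := Finset.card_filter_add_card_filter_not
    (s := (univ : Finset F)) (p := fun x => Algebra.trace (ZMod 2) F (a * x ^ 3) = 0)
  rw [card_univ] at hsplit
  rw [← Nat.cast_inj (R := ℤ)] at hsplit
  push_cast at hsplit ⊢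
  simp only [smul_eq_mul, nsmul_eq_mul] at *
  linarith

lemma count_insert_zero (P : F → Prop) [DecidablePred P] (hP : P 0) :
    (univ.filter P).card = (univ.filter fun x => x ≠ 0 ∧ P x).card + 1 := by
  have h : univ.filter P = insert 0 (univ.filter fun x => x ≠ 0 ∧ P x) := by
    ext x
    by_cases hx : x = 0 <;> simp [hx, hP]
  rw [h, card_insert_of_notMem (by simp)]

lemma zmod2_ne (c : ZMod 2) : ¬ c = 0 ↔ c = 1 := by revert c; decide

end Stmt7

/-- Let `q = 2^(2m)` with `m ≥ 2`, and let `ρ ∈ F_q^*`. Then the number of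
`γ ∈ F_q` with `Tr(γ^3/ρ + 1) = 1` equals `q/2 + (-1)^m √q = 2^(2m-1) + (-2)^m`
if `ρ` is a cube in `F_q`, and `q/2 - (-1)^m √q / 2 = 2^(2m-1) + (-2)^(m-1)`
if `ρ` is a non-cube in `F_q`. -/
theorem stmt7 {F : Type*} [Field F] [Fintype F] [Algebra (ZMod 2) F]
    (m : ℕ) (hm : 2 ≤ m) (hcard : Fintype.card F = 2 ^ (2 * m))
    (ρ : F) (hρ : ρ ≠ 0) :
    ((∃ γ : F, γ ≠ 0 ∧ γ ^ 3 = ρ) →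
      (Set.ncard {γ : F | Algebra.trace (ZMod 2) F (γ ^ 3 / ρ + 1) = 1} : ℤ) =
        2 ^ (2 * m - 1) + (-2 : ℤ) ^ m) ∧
    ((¬ ∃ γ : F, γ ≠ 0 ∧ γ ^ 3 = ρ) →
      (Set.ncard {γ : F | Algebra.trace (ZMod 2) F (γ ^ 3 / ρ + 1) = 1} : ℤ) =
        2 ^ (2 * m - 1) + (-2 : ℤ) ^ (m - 1)) := by
  classical
  open Stmt7 in
  -- notation
  set q : ℕ := 2 ^ (2 * m) with hq
  have hq16 : 16 ≤ q := by
    calc (16 : ℕ) = 2 ^ 4 := by norm_num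
    _ ≤ 2 ^ (2 * m) := Nat.pow_le_pow_right (by norm_num) (by omega)
  have hqZ : (q : ℤ) = 2 ^ (2 * m) := by rw [hq]; push_cast; ring
  -- divisibility by 3
  have h4m : (2 : ℕ) ^ (2 * m) = 4 ^ m := by rw [pow_mul]; norm_num
  have hmod : q % 3 = 1 := by
    rw [hq, h4m, Nat.pow_mod]; norm_num
  obtain ⟨k, hk⟩ : ∃ k, q - 1 = 3 * k := ⟨(q - 1) / 3, by omega⟩
  have hk5 : 5 ≤ k := by omega
  -- generator of units
  obtain ⟨g, hg⟩ := IsCyclic.exists_generator (α := Fˣ)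
  have hcardu : Fintype.card Fˣ = q - 1 := by rw [Fintype.card_units, hcard]
  have horder : orderOf g = q - 1 := by
    rw [orderOf_eq_card_of_forall_mem_zpowers hg, Nat.card_eq_fintype_card, hcardu]
  have hgk : g ^ k ≠ 1 := by
    intro h
    have hdvd : orderOf g ∣ k := orderOf_dvd_of_pow_eq_one h
    rw [horder] at hdvd
    have := Nat.le_of_dvd (by omega) hdvd
    omega
  -- cube root of unity
  set ω : F := ((g ^ k : Fˣ) : F) with hω
  have hω3 : ω ^ 3 = 1 := by
    rw [hω, ← Units.val_pow_eq_pow_val, ← pow_mul]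
    have : k * 3 = q - 1 := by omega
    rw [this, ← hcardu, pow_card_eq_one, Units.val_one]
  have hω1 : ω ≠ 1 := by
    intro h
    exact hgk (Units.ext (by simpa [hω] using h))
  -- trace surjectivity
  have hs : ∃ u : F, Algebra.trace (ZMod 2) F u ≠ 0 := trace_surj'
  -- the exponential sum
  set S : F → ℤ := fun a => ∑ x : F, Stmt7.e F (a * x ^ 3) with hS
  have hS0 : S 0 = (q : ℤ) := by
    rw [hS]
    simp only [zero_mul]
    rw [Finset.sum_congr rfl fun x _ => e_zero (F := F)]
    simp [card_univ, hcard]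
  -- cube predicate
  set cubeP : F → Prop := fun a => ∃ c : F, c ≠ 0 ∧ c ^ 3 = a with hcubeP
  have hSmul : ∀ b c : F, c ≠ 0 → S (b * c ^ 3) = S b := fun b c hc => S_mul_cube b c hc
  have hScube : ∀ a : F, cubeP a → S a = S 1 := by
    rintro a ⟨c, hc0, rfl⟩
    have := hSmul 1 c hc0
    rwa [one_mul] at this
  have hgF0 : (g : F) ≠ 0 := Units.ne_zero g
  have hSnc : ∀ a : F, a ≠ 0 → ¬ cubeP a → S a = S (g : F) := by
    intro a ha hnc
    obtain ⟨n, hn⟩ : ∃ n : ℕ, g ^ n = Units.mk0 a ha :=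
      (Submonoid.mem_powers_iff _ _).mp (mem_powers_iff_mem_zpowers.mpr (hg _))
    have haF : (g : F) ^ n = a := by
      have := congrArg Units.val hn
      rwa [Units.val_pow_eq_pow_val, Units.val_mk0] at this
    have hgj : ((g : F) ^ (n / 3)) ≠ 0 := pow_ne_zero _ hgF0
    set r : ℕ := n % 3 with hrdef
    have hr : r < 3 := Nat.mod_lt _ (by norm_num)
    have hsplit : a = (g : F) ^ r * ((g : F) ^ (n / 3)) ^ 3 := by
      rw [← pow_mul, ← pow_add, ← haF]
      congr 1
      rw [hrdef]
      omega
    interval_cases r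
    · exfalso
      apply hnc
      rw [pow_zero, one_mul] at hsplit
      exact ⟨(g : F) ^ (n / 3), hgj, hsplit.symm⟩
    · rw [hsplit, pow_one]
      exact hSmul _ _ hgj
    · rw [hsplit]
      rw [hSmul _ _ hgj]
      exact S_frob (g : F)
  -- counting cubes among nonzero elements
  have hcount : ∀ (P : F → Prop) [DecidablePred P],
      (univ.filter fun x : F => x ≠ 0 ∧ P (x ^ 3)).card
        = 3 * (univ.filter fun y : F => y ≠ 0 ∧ (∃ x, x ^ 3 = y) ∧ P y).card :=
    fun P _ => three_to_one hω1 hω3 P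
  have hcubetot : (univ.filter fun y : F => y ≠ 0 ∧ cubeP y).card = k := by
    have h0 := hcount (fun _ => True)
    have hL : (univ.filter fun x : F => x ≠ 0 ∧ True) = (univ.filter fun x : F => x ≠ 0) := by
      apply Finset.filter_congr; intro x _; simp
    have hR : (univ.filter fun y : F => y ≠ 0 ∧ (∃ x, x ^ 3 = y) ∧ True)
        = (univ.filter fun y : F => y ≠ 0 ∧ cubeP y) := by
      apply Finset.filter_congr
      intro y _
      simp only [and_true, hcubeP]
      constructor
      · rintro ⟨hy, x, hx⟩
        exact ⟨hy, x, fun h => hy (by rw [← hx, h]; simp), hx⟩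
      · rintro ⟨hy, c, hc0, hc⟩
        exact ⟨hy, c, hc⟩
    rw [hL, hR] at h0
    have hcard0 : (univ.filter fun x : F => x ≠ 0).card = q - 1 := by
      rw [Finset.filter_ne', card_erase_of_mem (mem_univ _), card_univ, hcard]
    rw [hcard0] at h0
    omega
  -- split sums over F at zero and into cube/noncube parts
  have hsplitsum : ∀ f : F → ℤ, ∑ a : F, f a
      = f 0 + (∑ a ∈ univ.filter (fun a : F => a ≠ 0 ∧ cubeP a), f a)
          + (∑ a ∈ univ.filter (fun a : F => a ≠ 0 ∧ ¬ cubeP a), f a) := by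
    intro f
    rw [← Finset.add_sum_erase univ f (mem_univ (0 : F))]
    rw [add_assoc]
    congr 1
    rw [← Finset.filter_ne' univ (0 : F)]
    rw [← Finset.sum_filter_add_sum_filter_not (univ.filter fun a : F => a ≠ 0) cubeP f]
    rw [Finset.filter_filter, Finset.filter_filter]
  have hcardnc : (univ.filter fun a : F => a ≠ 0 ∧ ¬ cubeP a).card = 2 * k := by
    have := Finset.card_filter_add_card_filter_not
      (s := univ.filter fun a : F => a ≠ 0) (p := cubeP)
    rw [Finset.filter_filter, Finset.filter_filter] at this
    have hcard0 : (univ.filter fun x : F => x ≠ 0).card = q - 1 := by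
      rw [Finset.filter_ne', card_erase_of_mem (mem_univ _), card_univ, hcard]
    rw [hcard0, hcubetot] at this
    omega
  set A : ℤ := S 1 with hA
  set t : ℤ := S (g : F) with ht
  have hvalC : ∀ a ∈ univ.filter (fun a : F => a ≠ 0 ∧ cubeP a), S a = A := by
    intro a ha
    rw [mem_filter] at ha
    exact hScube a ha.2.2
  have hvalN : ∀ a ∈ univ.filter (fun a : F => a ≠ 0 ∧ ¬ cubeP a), S a = t := by
    intro a ha
    rw [mem_filter] at ha
    exact hSnc a ha.2.1 ha.2.2
  have hsumC : ∑ a ∈ univ.filter (fun a : F => a ≠ 0 ∧ cubeP a), S a = (k : ℤ) * A := by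
    rw [Finset.sum_congr rfl hvalC]
    rw [Finset.sum_const, hcubetot, nsmul_eq_mul]
  have hsumN : ∑ a ∈ univ.filter (fun a : F => a ≠ 0 ∧ ¬ cubeP a), S a
      = 2 * (k : ℤ) * t := by
    rw [Finset.sum_congr rfl hvalN]
    rw [Finset.sum_const, hcardnc, nsmul_eq_mul]
    push_cast
    ring
  have hsumCsq : ∑ a ∈ univ.filter (fun a : F => a ≠ 0 ∧ cubeP a), (S a) ^ 2
      = (k : ℤ) * A ^ 2 := by
    rw [Finset.sum_congr rfl (fun a ha => congrArg (· ^ 2) (hvalC a ha))]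
    rw [Finset.sum_const, hcubetot, nsmul_eq_mul]
  have hsumNsq : ∑ a ∈ univ.filter (fun a : F => a ≠ 0 ∧ ¬ cubeP a), (S a) ^ 2
      = 2 * (k : ℤ) * t ^ 2 := by
    rw [Finset.sum_congr rfl (fun a ha => congrArg (· ^ 2) (hvalN a ha))]
    rw [Finset.sum_const, hcardnc, nsmul_eq_mul]
    push_cast
    ring
  -- first moment
  have hE1 : (q : ℤ) + ((k : ℤ) * A + 2 * (k : ℤ) * t) = (q : ℤ) := by
    have h := first_moment hs m hcard
    rw [show ∑ a : F, ∑ x : F, Stmt7.e F (a * x ^ 3) = ∑ a : F, S a from rfl] at h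
    rw [hsplitsum S, hS0, hsumC, hsumN] at h
    rw [← hqZ] at h
    linarith
  have hqk : (q : ℤ) - 1 = 3 * (k : ℤ) := by
    have h' : ((q - 1 : ℕ) : ℤ) = ((3 * k : ℕ) : ℤ) := by rw [hk]
    push_cast [Nat.cast_sub (by omega : 1 ≤ q)] at h'
    linarith
  have hAt : A = -2 * t := by
    have hk0 : (k : ℤ) ≠ 0 := by positivity
    have : (k : ℤ) * (A + 2 * t) = 0 := by linear_combination hE1
    rcases mul_eq_zero.mp this with h | h
    · exact absurd h hk0
    · linarith
  -- second moment
  have hE2 : (q : ℤ) ^ 2 + ((k : ℤ) * A ^ 2 + 2 * (k : ℤ) * t ^ 2)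
      = (q : ℤ) * (3 * (q : ℤ) - 2) := by
    have h := second_moment hs m hcard hω1 hω3
    rw [show ∑ a : F, (∑ x : F, Stmt7.e F (a * x ^ 3)) ^ 2 = ∑ a : F, (S a) ^ 2 from rfl] at h
    rw [hsplitsum (fun a => (S a) ^ 2), hsumCsq, hsumNsq] at h
    rw [← hqZ] at h
    have hS0sq : S 0 ^ 2 = (q : ℤ) ^ 2 := by rw [hS0]
    rw [hS0sq] at h
    linarith
  have ht2 : t ^ 2 = (q : ℤ) := by
    have hk0 : (k : ℤ) ≠ 0 := by positivity
    have hAt2 : A + 2 * t = 0 := by linarith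
    have h6 : (k : ℤ) * (6 * t ^ 2) = (k : ℤ) * (6 * (q : ℤ)) := by
      linear_combination hE2 + (-(k : ℤ) * (A - 2 * t)) * hAt2 + 2 * (q : ℤ) * hqk
    have := mul_left_cancel₀ hk0 h6
    linarith
  -- congruence mod 3
  have ht3 : (3 : ℤ) ∣ t - 1 := by
    have hcnt := S_count (F := F) (g : F)
    rw [hcard] at hcnt
    have htS : t = 2 * ((univ.filter fun x : F =>
        Algebra.trace (ZMod 2) F ((g : F) * x ^ 3) = 0).card : ℤ) - (q : ℤ) := by
      rw [ht]; exact hcnt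
    have hins := count_insert_zero (F := F)
      (fun x => Algebra.trace (ZMod 2) F ((g : F) * x ^ 3) = 0) (by simp)
    have hdiv := hcount (fun y => Algebra.trace (ZMod 2) F ((g : F) * y) = 0)
    rw [hdiv] at hins
    set c : ℕ := (univ.filter fun y : F =>
      y ≠ 0 ∧ (∃ x, x ^ 3 = y) ∧ Algebra.trace (ZMod 2) F ((g : F) * y) = 0).card with hc
    have hinsZ : ((univ.filter fun x : F =>
        Algebra.trace (ZMod 2) F ((g : F) * x ^ 3) = 0).card : ℤ) = 3 * (c : ℤ) + 1 := by
      exact_mod_cast congrArg (Nat.cast : ℕ → ℤ) hins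
    rw [hinsZ] at htS
    exact ⟨2 * (c : ℤ) - (k : ℤ), by linarith⟩
  -- determine the sign
  have hw2 : ((-2 : ℤ) ^ m) ^ 2 = (q : ℤ) := by
    rw [← pow_mul, hq]
    push_cast
    rw [show m * 2 = 2 * m by ring]
    rw [pow_mul, pow_mul]
    norm_num
  have hw3 : (3 : ℤ) ∣ (-2 : ℤ) ^ m - 1 := by
    have h := sub_dvd_pow_sub_pow (-2 : ℤ) 1 m
    rw [one_pow] at h
    have : (-2 : ℤ) - 1 = -3 := by norm_num
    rw [this] at h
    exact (neg_dvd).mp h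
  have htw : t = (-2 : ℤ) ^ m := by
    have hfac : (t - (-2 : ℤ) ^ m) * (t + (-2 : ℤ) ^ m) = 0 := by
      linear_combination ht2 - hw2
    rcases mul_eq_zero.mp hfac with h | h
    · linarith [sub_eq_zero.mp h]
    · exfalso
      have hto : t = -(-2 : ℤ) ^ m := by linarith
      obtain ⟨u, hu⟩ := ht3
      obtain ⟨v, hv⟩ := hw3
      omega
  -- final counting: relation between the target set and S(ρ⁻¹)
  have hρi : ρ⁻¹ ≠ 0 := inv_ne_zero hρ
  set N : ℕ := (univ.filter fun γ : F =>
    Algebra.trace (ZMod 2) F (ρ⁻¹ * γ ^ 3) = 1).card with hN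
  have hNS : 2 * (N : ℤ) = (q : ℤ) - S ρ⁻¹ := by
    have hcnt := S_count (F := F) ρ⁻¹
    rw [hcard] at hcnt
    have hsplit := Finset.card_filter_add_card_filter_not
      (s := (univ : Finset F)) (p := fun γ : F => Algebra.trace (ZMod 2) F (ρ⁻¹ * γ ^ 3) = 0)
    rw [card_univ, hcard] at hsplit
    have hne : (univ.filter fun γ : F => ¬ Algebra.trace (ZMod 2) F (ρ⁻¹ * γ ^ 3) = 0)
        = (univ.filter fun γ : F => Algebra.trace (ZMod 2) F (ρ⁻¹ * γ ^ 3) = 1) := by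
      apply Finset.filter_congr
      intro γ _
      exact zmod2_ne _
    rw [hne] at hsplit
    have hSρ : S ρ⁻¹ = 2 * ((univ.filter fun γ : F =>
        Algebra.trace (ZMod 2) F (ρ⁻¹ * γ ^ 3) = 0).card : ℤ) - (q : ℤ) := hcnt
    rw [← hN] at hsplit
    have : ((univ.filter fun γ : F =>
        Algebra.trace (ZMod 2) F (ρ⁻¹ * γ ^ 3) = 0).card : ℤ) + (N : ℤ) = (q : ℤ) := by
      exact_mod_cast congrArg (Nat.cast : ℕ → ℤ) hsplit
    rw [hSρ]
    linarith
  -- the set in the statement equals our filter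
  have hseteq : {γ : F | Algebra.trace (ZMod 2) F (γ ^ 3 / ρ + 1) = 1}
      = ↑(univ.filter fun γ : F => Algebra.trace (ZMod 2) F (ρ⁻¹ * γ ^ 3) = 1) := by
    ext γ
    simp only [Set.mem_setOf_eq, Finset.coe_filter, mem_univ, true_and]
    have harg : γ ^ 3 / ρ = ρ⁻¹ * γ ^ 3 := by rw [div_eq_mul_inv, mul_comm]
    rw [harg, map_add, trace_one_eq_zero m hcard, add_zero]
  have hncard : (Set.ncard {γ : F | Algebra.trace (ZMod 2) F (γ ^ 3 / ρ + 1) = 1} : ℤ)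
      = (N : ℤ) := by
    rw [hseteq, Set.ncard_coe_finset, hN]
  have hpow : (q : ℤ) = 2 * 2 ^ (2 * m - 1) := by
    rw [hqZ]
    conv_lhs => rw [show 2 * m = (2 * m - 1) + 1 by omega]
    rw [pow_succ]
    ring
  constructor
  · rintro ⟨γ0, hγ0, hγ3⟩
    have hcube : cubeP ρ⁻¹ := ⟨γ0⁻¹, inv_ne_zero hγ0, by rw [inv_pow, hγ3]⟩
    have hSval : S ρ⁻¹ = A := hScube _ hcube
    rw [hncard]
    rw [hSval, hAt, htw] at hNS
    linarith
  · intro hnc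
    have hncube : ¬ cubeP ρ⁻¹ := by
      intro ⟨c, hc0, hc⟩
      exact hnc ⟨c⁻¹, inv_ne_zero hc0, by rw [inv_pow, hc, inv_inv]⟩
    have hSval : S ρ⁻¹ = t := hSnc _ hρi hncube
    rw [hncard]
    rw [hSval, htw] at hNS
    have hm2 : (-2 : ℤ) ^ m = -2 * (-2 : ℤ) ^ (m - 1) := by
      conv_lhs => rw [show m = (m - 1) + 1 by omega]
      rw [pow_succ]
      ring
    rw [hm2] at hNS
    linarith
end

section
/- Let q = 2^(2m) with m ≥ 2 and let a ∈ F_q^*. Then the character sum S(a) = Σ_{x ∈ F_q} (-1)^{Tr(a x^3)} equals (-1)^(m+1) · 2^(m+1) if a is a cube in F_q, and (-1)^m · 2^m if a is a non-cube in F_q. -/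
set_option linter.unusedSectionVars false
open Finset Polynomial

namespace Carlitz8

variable {F : Type*} [Field F] [Fintype F] [DecidableEq F] [Algebra (ZMod 2) F]

noncomputable def psi (F : Type*) [Field F] [Fintype F] [Algebra (ZMod 2) F] (z : F) : ℤ :=
  if Algebra.trace (ZMod 2) F z = 0 then 1 else -1

lemma psi_add (x y : F) : psi F (x + y) = psi F x * psi F y := by
  have : ∀ s t : ZMod 2, (if s + t = 0 then (1:ℤ) else -1)
    = (if s = 0 then (1:ℤ) else -1) * (if t = 0 then (1:ℤ) else -1) := by decide
  simpa [psi, map_add] using this (Algebra.trace (ZMod 2) F x) (Algebra.trace (ZMod 2) F y)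

lemma psi_zero : psi F 0 = 1 := by simp [psi]

lemma sum_psi : ∑ x : F, psi F x = 0 := by
  haveI : FiniteDimensional (ZMod 2) F := Module.Finite.of_finite
  obtain ⟨z, hz⟩ := Algebra.trace_surjective (ZMod 2) F 1
  have hpz : psi F z = -1 := by simp [psi, hz]
  have h : ∑ x : F, psi F x = ∑ x : F, psi F (x + z) :=
    (Fintype.sum_equiv (Equiv.addRight z) _ _ (fun x => rfl)).symm
  have h2 : ∑ x : F, psi F (x + z) = (∑ x : F, psi F x) * psi F z := by
    rw [Finset.sum_mul]; exact Finset.sum_congr rfl fun x _ => psi_add x z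
  rw [h2, hpz] at h
  linarith

lemma sum_psi_mul (t : F) :
    ∑ z : F, psi F (z * t) = if t = 0 then (Fintype.card F : ℤ) else 0 := by
  rcases eq_or_ne t 0 with rfl | ht
  · simp [psi]
  · rw [if_neg ht]
    calc ∑ z : F, psi F (z * t) = ∑ z : F, psi F z :=
          Fintype.sum_equiv (Equiv.mulRight₀ t ht) _ _
            (fun x => by rw [Equiv.mulRight₀_apply])
      _ = 0 := sum_psi

noncomputable def S (F : Type*) [Field F] [Fintype F] [Algebra (ZMod 2) F] (a : F) : ℤ :=
  ∑ x : F, psi F (a * x ^ 3)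

lemma S_zero : S F 0 = (Fintype.card F : ℤ) := by simp [S, psi]

lemma S_mul_cube (a : F) {c : F} (hc : c ≠ 0) : S F (a * c ^ 3) = S F a := by
  unfold S
  refine Fintype.sum_equiv (Equiv.mulLeft₀ c hc) _ _ (fun x => ?_)
  rw [Equiv.mulLeft₀_apply, show a * c ^ 3 * x ^ 3 = a * (c * x) ^ 3 by ring]

lemma S_sq (a : F) : S F (a ^ 2) = S F a := by
  haveI : CharP F 2 := charP_of_injective_algebraMap (algebraMap (ZMod 2) F).injective 2
  haveI : PerfectRing F 2 := PerfectRing.ofFiniteOfIsReduced 2 F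
  have psisq : ∀ z : F, psi F (z ^ 2) = psi F z := by
    intro z
    let e : F ≃ₐ[ZMod 2] F :=
      AlgEquiv.ofRingEquiv (f := frobeniusEquiv F 2)
        (fun c => by
          have h2 : ∀ c : ZMod 2, c ^ 2 = c := by decide
          rw [frobeniusEquiv_apply, frobenius_def, ← map_pow, h2])
    have h := Algebra.trace_eq_of_algEquiv e z
    have hz : e z = z ^ 2 := rfl
    rw [hz] at h
    simp only [psi, h]
  unfold S
  calc ∑ x : F, psi F (a ^ 2 * x ^ 3)
      = ∑ x : F, psi F (a ^ 2 * (x ^ 2) ^ 3) := by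
        refine (Fintype.sum_equiv (frobeniusEquiv F 2).toEquiv _ _ (fun x => ?_)).symm
        rfl
    _ = ∑ x : F, psi F (a * x ^ 3) := by
        refine Finset.sum_congr rfl fun x _ => ?_
        rw [show a ^ 2 * (x ^ 2) ^ 3 = (a * x ^ 3) ^ 2 by ring, psisq]

def IsCube (a : F) : Prop := ∃ b : F, b ≠ 0 ∧ b ^ 3 = a

instance : DecidablePred (IsCube (F := F)) := fun a =>
  decidable_of_iff (∃ b : F, b ≠ 0 ∧ b ^ 3 = a) Iff.rfl

lemma card_cuberoots (h3 : 3 ∣ Fintype.card F - 1) (h1 : 1 < Fintype.card F) :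
    (univ.filter fun x : F => x ^ 3 = 1).card = 3 := by
  obtain ⟨g, hg⟩ := IsCyclic.exists_generator (α := Fˣ)
  have hord : orderOf g = Fintype.card F - 1 := by
    rw [orderOf_eq_card_of_forall_mem_zpowers hg, Nat.card_eq_fintype_card,
      Fintype.card_units]
  obtain ⟨k, hk⟩ := h3
  have hkpos : 0 < k := by omega
  have hordζ : orderOf (g ^ k) = 3 := by
    rw [orderOf_pow, hord, hk, Nat.gcd_eq_right ⟨3, by ring⟩,
      Nat.mul_div_cancel _ hkpos]
  have hprim : IsPrimitiveRoot (g ^ k) 3 := hordζ ▸ IsPrimitiveRoot.orderOf (g ^ k)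
  have hprimF : IsPrimitiveRoot ((g ^ k : Fˣ) : F) 3 := IsPrimitiveRoot.coe_units_iff.mpr hprim
  have hset : (univ.filter fun x : F => x ^ 3 = 1) = nthRootsFinset 3 (1 : F) := by
    ext x
    simp [Polynomial.mem_nthRootsFinset (by norm_num : 0 < 3) (1 : F)]
  rw [hset, hprimF.card_nthRootsFinset]

lemma card_fiber (h3 : 3 ∣ Fintype.card F - 1) (h1 : 1 < Fintype.card F)
    {c : F} (hc : c ≠ 0) :
    (univ.filter fun x : F => x ^ 3 = c ^ 3).card = 3 := by
  have hbij : (univ.filter fun x : F => x ^ 3 = c ^ 3).card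
      = (univ.filter fun z : F => z ^ 3 = 1).card := by
    apply Finset.card_bij (fun x _ => c⁻¹ * x)
    · intro x hx
      simp only [mem_filter, mem_univ, true_and] at hx ⊢
      rw [mul_pow, hx, inv_pow]
      field_simp
    · intro x₁ h₁ x₂ h₂ h
      exact mul_left_cancel₀ (inv_ne_zero hc) h
    · intro z hz
      simp only [mem_filter, mem_univ, true_and] at hz
      refine ⟨c * z, ?_, by field_simp⟩
      simp only [mem_filter, mem_univ, true_and]
      rw [mul_pow, hz, mul_one]
  rw [hbij, card_cuberoots h3 h1]

lemma fiber_erase (h3 : 3 ∣ Fintype.card F - 1) (h1 : 1 < Fintype.card F)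
    {c : F} (hc : c ≠ 0) :
    ((univ.erase (0:F)).filter fun x : F => x ^ 3 = c ^ 3).card = 3 := by
  have hset : ((univ.erase (0:F)).filter fun x : F => x ^ 3 = c ^ 3)
      = (univ.filter fun x : F => x ^ 3 = c ^ 3) := by
    ext x
    simp only [mem_filter, mem_erase, mem_univ, true_and, and_true]
    constructor
    · tauto
    · intro hx
      refine ⟨?_, hx⟩
      rintro rfl
      rw [zero_pow (by norm_num)] at hx
      exact hc ((pow_eq_zero_iff (n := 3) (by norm_num)).mp hx.symm)
  rw [hset, card_fiber h3 h1 hc]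

lemma cube_count (h3 : 3 ∣ Fintype.card F - 1) (h1 : 1 < Fintype.card F) :
    3 * ((univ.erase (0:F)).filter IsCube).card = Fintype.card F - 1 := by
  have hmaps : ∀ x ∈ univ.erase (0:F), x ^ 3 ∈ univ.erase (0:F) := by
    intro x hx
    simp only [mem_erase, mem_univ, and_true] at hx ⊢
    exact pow_ne_zero 3 hx
  have hcardT : (univ.erase (0:F)).card = Fintype.card F - 1 := by
    rw [Finset.card_erase_of_mem (mem_univ 0), Finset.card_univ]
  rw [← hcardT, Finset.card_eq_sum_card_fiberwise hmaps]
  have hfib : ∀ a ∈ univ.erase (0:F),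
      ((univ.erase (0:F)).filter fun x => x ^ 3 = a).card = if IsCube a then 3 else 0 := by
    intro a haT
    simp only [mem_erase, mem_univ, and_true] at haT
    by_cases hcu : IsCube a
    · obtain ⟨b, hb, rfl⟩ := hcu
      rw [if_pos ⟨b, hb, rfl⟩]
      exact fiber_erase h3 h1 hb
    · rw [if_neg hcu, Finset.card_eq_zero, Finset.filter_eq_empty_iff]
      intro x hx
      simp only [mem_erase, mem_univ, and_true] at hx
      exact fun h => hcu ⟨x, hx, h⟩
  rw [Finset.sum_congr rfl hfib, Finset.sum_ite, Finset.sum_const, Finset.sum_const]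
  simp [mul_comm]

lemma exists_noncube (h3 : 3 ∣ Fintype.card F - 1) (h1 : 16 ≤ Fintype.card F) :
    ∃ a : F, a ≠ 0 ∧ ¬ IsCube a := by
  have h1' : 1 < Fintype.card F := by omega
  have hc := cube_count (F := F) h3 h1'
  by_contra h
  push_neg at h
  have : (univ.erase (0:F)).filter IsCube = univ.erase (0:F) := by
    rw [Finset.filter_eq_self]
    intro a haT
    simp only [mem_erase, mem_univ, and_true] at haT
    exact h a haT
  rw [this, Finset.card_erase_of_mem (mem_univ 0), Finset.card_univ] at hc
  omega

lemma noncube_rel {a b : F} (ha : a ≠ 0) (hb : b ≠ 0)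
    (hna : ¬ IsCube a) (hnb : ¬ IsCube b) :
    (∃ c : F, c ≠ 0 ∧ b = a * c ^ 3) ∨ (∃ c : F, c ≠ 0 ∧ b = a ^ 2 * c ^ 3) := by
  obtain ⟨g, hg⟩ := IsCyclic.exists_generator (α := Fˣ)
  have hcube : ∀ i : ℤ, 3 ∣ i → IsCube ((g ^ i : Fˣ) : F) := by
    rintro i ⟨t, rfl⟩
    exact ⟨((g ^ t : Fˣ) : F), Units.ne_zero _, by
      rw [← Units.val_pow_eq_pow_val, ← zpow_natCast, ← zpow_mul]
      norm_num [mul_comm]⟩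
  obtain ⟨i, hi⟩ := Subgroup.mem_zpowers_iff.mp (hg (Units.mk0 a ha))
  obtain ⟨j, hj⟩ := Subgroup.mem_zpowers_iff.mp (hg (Units.mk0 b hb))
  have hai : a = ((g ^ i : Fˣ) : F) := by rw [hi]; rfl
  have hbj : b = ((g ^ j : Fˣ) : F) := by rw [hj]; rfl
  have hi3 : ¬ (3 ∣ i) := fun h => hna (hai ▸ hcube i h)
  have hj3 : ¬ (3 ∣ j) := fun h => hnb (hbj ▸ hcube j h)
  have hsplit : 3 ∣ (j - i) ∨ 3 ∣ (j - 2 * i) := by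
    have h1 : i % 3 = 1 ∨ i % 3 = 2 := by omega
    have h2 : j % 3 = 1 ∨ j % 3 = 2 := by omega
    rcases h1 with h1 | h1 <;> rcases h2 with h2 | h2
    · exact Or.inl (by omega)
    · exact Or.inr (by omega)
    · exact Or.inr (by omega)
    · exact Or.inl (by omega)
  rcases hsplit with ⟨t, ht⟩ | ⟨t, ht⟩
  · left
    refine ⟨((g ^ t : Fˣ) : F), Units.ne_zero _, ?_⟩
    have : (g ^ j : Fˣ) = (g ^ i) * (g ^ t) ^ 3 := by
      rw [← zpow_natCast (g ^ t), ← zpow_mul, ← zpow_add]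
      congr 1
      push_cast
      omega
    rw [hbj, hai, this]
    push_cast
    ring
  · right
    refine ⟨((g ^ t : Fˣ) : F), Units.ne_zero _, ?_⟩
    have : (g ^ j : Fˣ) = (g ^ i) ^ 2 * (g ^ t) ^ 3 := by
      rw [← zpow_natCast (g ^ t), ← zpow_natCast (g ^ i), ← zpow_mul, ← zpow_mul, ← zpow_add]
      congr 1
      push_cast
      omega
    rw [hbj, hai, this]
    push_cast
    ring

lemma S_cube {a : F} (h : IsCube a) : S F a = S F 1 := by
  obtain ⟨b, hb, rfl⟩ := h
  rw [show b ^ 3 = 1 * b ^ 3 by ring, S_mul_cube 1 hb]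

lemma S_noncube {a b : F} (ha : a ≠ 0) (hb : b ≠ 0)
    (hna : ¬ IsCube a) (hnb : ¬ IsCube b) : S F b = S F a := by
  rcases noncube_rel ha hb hna hnb with ⟨c, hc, rfl⟩ | ⟨c, hc, rfl⟩
  · exact S_mul_cube a hc
  · rw [S_mul_cube (a ^ 2) hc, S_sq]

lemma S_one_mod3 (h3 : 3 ∣ Fintype.card F - 1) (h1 : 1 < Fintype.card F) :
    (3 : ℤ) ∣ S F 1 - 1 := by
  have h : S F 1 - 1 = ∑ x ∈ univ.erase (0:F), psi F (x ^ 3) := by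
    unfold S
    simp_rw [one_mul]
    rw [← Finset.add_sum_erase univ (fun x => psi F (x ^ 3)) (mem_univ 0)]
    have : psi F ((0:F) ^ 3) = 1 := by
      rw [zero_pow (by norm_num), psi_zero]
    rw [this]
    ring
  rw [h, Finset.sum_comp (psi F) (fun x : F => x ^ 3)]
  have hfib : ∀ b ∈ (univ.erase (0:F)).image (fun x : F => x ^ 3),
      ((univ.erase (0:F)).filter fun x => x ^ 3 = b).card = 3 := by
    intro b hbmem
    obtain ⟨x, hx, rfl⟩ := Finset.mem_image.mp hbmem
    simp only [mem_erase, mem_univ, and_true] at hx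
    exact fiber_erase h3 h1 hx
  have hcalc : (∑ b ∈ (univ.erase (0:F)).image (fun x : F => x ^ 3),
        ((univ.erase (0:F)).filter fun x => x ^ 3 = b).card • psi F b)
      = 3 * ∑ b ∈ (univ.erase (0:F)).image (fun x : F => x ^ 3), psi F b := by
    rw [Finset.mul_sum]
    refine Finset.sum_congr rfl fun b hb => ?_
    rw [hfib b hb, nsmul_eq_mul]
    norm_num
  rw [hcalc]
  exact Dvd.intro _ rfl

lemma sum_S : ∑ a ∈ univ.erase (0:F), S F a = 0 := by
  have htot : ∑ a : F, S F a = (Fintype.card F : ℤ) := by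
    unfold S
    rw [Finset.sum_comm]
    have hinner : ∀ x : F, ∑ a : F, psi F (a * x ^ 3)
        = if x = 0 then (Fintype.card F : ℤ) else 0 := by
      intro x
      rw [sum_psi_mul (x ^ 3)]
      congr 1
      simp [pow_eq_zero_iff]
    rw [Finset.sum_congr rfl fun x _ => hinner x, Finset.sum_ite_eq' univ (0:F)]
    simp
  have := Finset.add_sum_erase univ (S F) (mem_univ (0:F))
  rw [S_zero] at this
  omega

lemma sum_S_sq (h3 : 3 ∣ Fintype.card F - 1) (h1 : 1 < Fintype.card F) :
    ∑ a ∈ univ.erase (0:F), (S F a) ^ 2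
      = 2 * (Fintype.card F : ℤ) ^ 2 - 2 * (Fintype.card F : ℤ) := by
  haveI : CharP F 2 := charP_of_injective_algebraMap (algebraMap (ZMod 2) F).injective 2
  set q : ℤ := (Fintype.card F : ℤ) with hq
  have htot : ∑ a : F, (S F a) ^ 2 = q * (3 * q - 2) := by
    have hsq : ∀ a : F, (S F a) ^ 2 = ∑ x : F, ∑ y : F, psi F (a * (x ^ 3 + y ^ 3)) := by
      intro a
      rw [sq, S, Finset.sum_mul_sum]
      refine Finset.sum_congr rfl fun x _ => Finset.sum_congr rfl fun y _ => ?_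
      rw [← psi_add, mul_add]
    calc ∑ a : F, (S F a) ^ 2
        = ∑ a : F, ∑ x : F, ∑ y : F, psi F (a * (x ^ 3 + y ^ 3)) :=
          Finset.sum_congr rfl fun a _ => hsq a
      _ = ∑ x : F, ∑ y : F, ∑ a : F, psi F (a * (x ^ 3 + y ^ 3)) := by
          rw [Finset.sum_comm]
          exact Finset.sum_congr rfl fun x _ => Finset.sum_comm
      _ = ∑ x : F, ∑ y : F, (if y ^ 3 = x ^ 3 then q else 0) := by
          refine Finset.sum_congr rfl fun x _ => Finset.sum_congr rfl fun y _ => ?_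
          rw [sum_psi_mul]
          congr 1
          rw [add_comm, add_eq_zero_iff_eq_neg, CharTwo.neg_eq]
      _ = ∑ x : F, ((univ.filter fun y : F => y ^ 3 = x ^ 3).card : ℤ) * q := by
          refine Finset.sum_congr rfl fun x _ => ?_
          rw [Finset.sum_ite, Finset.sum_const, Finset.sum_const_zero, add_zero,
            nsmul_eq_mul]
      _ = q * (3 * q - 2) := by
          rw [← Finset.add_sum_erase univ _ (mem_univ (0:F))]
          have h0 : ((univ.filter fun y : F => y ^ 3 = (0:F) ^ 3).card : ℤ) = 1 := by
            have : (univ.filter fun y : F => y ^ 3 = (0:F) ^ 3) = {0} := by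
              ext y
              simp [pow_eq_zero_iff]
            rw [this]
            simp
          have hx : ∀ x ∈ univ.erase (0:F),
              ((univ.filter fun y : F => y ^ 3 = x ^ 3).card : ℤ) * q = 3 * q := by
            intro x hx
            simp only [mem_erase, mem_univ, and_true] at hx
            rw [card_fiber h3 h1 hx]
            norm_num
          rw [h0, Finset.sum_congr rfl hx, Finset.sum_const,
            Finset.card_erase_of_mem (mem_univ 0), Finset.card_univ, nsmul_eq_mul]
          have hqpos : (1:ℤ) ≤ q := by
            rw [hq]; exact_mod_cast h1.le
          push_cast [Nat.cast_sub (by omega : 1 ≤ Fintype.card F)]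
          ring
  have := Finset.add_sum_erase univ (fun a => (S F a) ^ 2) (mem_univ (0:F))
  simp only [S_zero] at this
  rw [← hq] at this
  nlinarith [this, htot]

end Carlitz8

namespace Carlitz8

variable {F : Type*} [Field F] [Fintype F] [DecidableEq F] [Algebra (ZMod 2) F]

lemma key_dvd : ∀ n : ℕ, (3:ℤ) ∣ 2 ^ n - (-1) ^ n := by
  intro n
  induction n with
  | zero => simp
  | succ n ih =>
      have h : (2:ℤ) ^ (n+1) - (-1) ^ (n+1) = 2 * ((2:ℤ) ^ n - (-1) ^ n) + 3 * (-1) ^ n := by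
        ring
      rw [h]
      exact dvd_add (Dvd.dvd.mul_left ih 2) ⟨(-1) ^ n, rfl⟩

lemma main (m : ℕ) (hm : 2 ≤ m) (hcard : Fintype.card F = 2 ^ (2 * m)) :
    (∀ a : F, a ≠ 0 → IsCube a → S F a = (-1:ℤ) ^ (m+1) * 2 ^ (m+1)) ∧
    (∀ a : F, a ≠ 0 → ¬ IsCube a → S F a = (-1:ℤ) ^ m * 2 ^ m) := by
  have h16 : 16 ≤ Fintype.card F := by
    rw [hcard]
    calc (16:ℕ) = 2 ^ 4 := by norm_num
      _ ≤ 2 ^ (2 * m) := Nat.pow_le_pow_right (by norm_num) (by omega)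
  have h1 : 1 < Fintype.card F := by omega
  have h3 : 3 ∣ Fintype.card F - 1 := by
    have h4 : Fintype.card F = 4 ^ m := by
      rw [hcard, pow_mul]
      norm_num
    have : 4 ^ m % 3 = 1 := by
      rw [Nat.pow_mod]
      norm_num
    omega
  obtain ⟨a₀, ha₀, hna₀⟩ := exists_noncube h3 h16
  set P : ℤ := S F 1 with hP
  set N : ℤ := S F a₀ with hN
  set q : ℤ := (Fintype.card F : ℤ) with hq
  set K : ℕ := ((univ.erase (0:F)).filter IsCube).card with hK
  have hKq : 3 * (K:ℤ) = q - 1 := by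
    have h := cube_count (F := F) h3 h1
    rw [hq, hK]
    omega
  have hclass : ∀ a ∈ univ.erase (0:F), S F a = if IsCube a then P else N := by
    intro a haT
    simp only [mem_erase, mem_univ, and_true] at haT
    by_cases hcu : IsCube a
    · rw [if_pos hcu, hP, S_cube hcu]
    · rw [if_neg hcu, hN, S_noncube ha₀ haT hna₀ hcu]
  have hcardT : ((univ.erase (0:F)).card : ℤ) = q - 1 := by
    rw [Finset.card_erase_of_mem (mem_univ 0), Finset.card_univ, hq]
    push_cast [Nat.cast_sub (by omega : 1 ≤ Fintype.card F)]
    ring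
  have hKc : (((univ.erase (0:F)).filter (fun a => ¬ IsCube a)).card : ℤ) = 2 * K := by
    have := Finset.card_filter_add_card_filter_not
      (s := univ.erase (0:F)) (p := IsCube (F := F))
    have h2 : (K:ℤ) + (((univ.erase (0:F)).filter (fun a => ¬ IsCube a)).card : ℤ) = q - 1 := by
      rw [← hcardT, hK]
      exact_mod_cast this
    omega
  have hsplit : ∀ f : F → ℤ, ∑ a ∈ univ.erase (0:F), f a
      = (∑ a ∈ (univ.erase (0:F)).filter IsCube, f a)
        + ∑ a ∈ (univ.erase (0:F)).filter (fun a => ¬ IsCube a), f a := by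
    intro f
    exact (Finset.sum_filter_add_sum_filter_not _ _ f).symm
  -- first moment
  have heq1 : (K:ℤ) * P + 2 * K * N = 0 := by
    have h := sum_S (F := F)
    rw [Finset.sum_congr rfl hclass, hsplit] at h
    rw [Finset.sum_congr rfl (fun a haf => if_pos (Finset.mem_filter.mp haf).2)] at h
    rw [Finset.sum_congr rfl (fun a haf => if_neg (Finset.mem_filter.mp haf).2)] at h
    rw [Finset.sum_const, Finset.sum_const, nsmul_eq_mul, nsmul_eq_mul, ← hK] at h
    rw [← h, hKc]
  -- second moment
  have heq2 : (K:ℤ) * P ^ 2 + 2 * K * N ^ 2 = 2 * q ^ 2 - 2 * q := by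
    have h := sum_S_sq (F := F) h3 h1
    have hclass2 : ∀ a ∈ univ.erase (0:F),
        (S F a) ^ 2 = if IsCube a then P ^ 2 else N ^ 2 := by
      intro a haT
      rw [hclass a haT]
      split_ifs <;> rfl
    rw [Finset.sum_congr rfl hclass2, hsplit] at h
    rw [Finset.sum_congr rfl (fun a haf => if_pos (Finset.mem_filter.mp haf).2)] at h
    rw [Finset.sum_congr rfl (fun a haf => if_neg (Finset.mem_filter.mp haf).2)] at h
    rw [Finset.sum_const, Finset.sum_const, nsmul_eq_mul, nsmul_eq_mul, ← hK] at h
    rw [← hq] at h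
    rw [← h, hKc]
  have hKpos : (1:ℤ) ≤ (K:ℤ) := by
    have : (16:ℤ) ≤ q := by rw [hq]; exact_mod_cast h16
    omega
  have hPN : P = -2 * N := by
    have : (K:ℤ) * (P + 2 * N) = 0 := by linarith [heq1]
    rcases mul_eq_zero.mp this with h | h
    · omega
    · linarith
  set Q : ℤ := 2 ^ m with hQ
  have hqQ : q = Q ^ 2 := by
    rw [hq, hcard, hQ]
    push_cast
    rw [← pow_mul, mul_comm m 2]
  have hNQ : N = Q ∨ N = -Q := by
    have h6 : (K:ℤ) * (6 * N ^ 2 - 6 * q) = 0 := by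
      have : (K:ℤ) * P ^ 2 = K * (4 * N ^ 2) := by rw [hPN]; ring
      have hq3K : 2 * q ^ 2 - 2 * q = 2 * q * (3 * K) := by rw [hKq]; ring
      nlinarith [heq2]
    have hN2 : N ^ 2 = q := by
      rcases mul_eq_zero.mp h6 with h | h
      · omega
      · linarith
    have : (N - Q) * (N + Q) = 0 := by rw [hqQ] at hN2; nlinarith [hN2]
    rcases mul_eq_zero.mp this with h | h
    · left; linarith
    · right; linarith
  have hmod : (3:ℤ) ∣ P - 1 := S_one_mod3 h3 h1
  have hkey := key_dvd m
  have hNval : N = (-1) ^ m * 2 ^ m := by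
    rcases Nat.even_or_odd m with he | ho
    · have hm1 : ((-1:ℤ)) ^ m = 1 := he.neg_one_pow
      rw [hm1, one_mul, ← hQ]
      rcases hNQ with h | h
      · exact h
      · exfalso
        rw [hPN, h] at hmod
        rw [hm1] at hkey
        omega
    · have hm1 : ((-1:ℤ)) ^ m = -1 := ho.neg_one_pow
      rw [hm1, ← hQ]
      rcases hNQ with h | h
      · exfalso
        rw [hPN, h] at hmod
        rw [hm1] at hkey
        omega
      · rw [h]; ring
  have hPval : P = (-1) ^ (m+1) * 2 ^ (m+1) := by
    rw [hPN, hNval, pow_succ, pow_succ]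
    ring
  constructor
  · intro a ha hcu
    rw [S_cube hcu, ← hP, hPval]
  · intro a ha hcu
    rw [S_noncube ha₀ ha hna₀ hcu, ← hN, hNval]

end Carlitz8


/-- Carlitz's evaluation: for `q = 2^(2m)` with `m ≥ 2` and `a ∈ F_q^*`, the
character sum `S(a) = Σ_{x ∈ F_q} (-1)^{Tr(a x^3)}` equals `(-1)^(m+1) 2^(m+1)`
if `a` is a cube in `F_q`, and `(-1)^m 2^m` if `a` is a non-cube. -/
theorem stmt8 {F : Type*} [Field F] [Fintype F] [Algebra (ZMod 2) F]
    (m : ℕ) (hm : 2 ≤ m) (hcard : Fintype.card F = 2 ^ (2 * m))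
    (a : F) (ha : a ≠ 0) :
    ((∃ b : F, b ≠ 0 ∧ b ^ 3 = a) →
      (∑ x : F, if Algebra.trace (ZMod 2) F (a * x ^ 3) = 0 then (1 : ℤ) else -1) =
        (-1 : ℤ) ^ (m + 1) * 2 ^ (m + 1)) ∧
    ((¬ ∃ b : F, b ≠ 0 ∧ b ^ 3 = a) →
      (∑ x : F, if Algebra.trace (ZMod 2) F (a * x ^ 3) = 0 then (1 : ℤ) else -1) =
        (-1 : ℤ) ^ m * 2 ^ m) := by
  classical
  have hmain := Carlitz8.main (F := F) m hm hcard
  have hS : (∑ x : F, if Algebra.trace (ZMod 2) F (a * x ^ 3) = 0 then (1 : ℤ) else -1)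
      = Carlitz8.S F a := rfl
  constructor
  · intro hcube
    rw [hS]
    exact hmain.1 a ha hcube
  · intro hcube
    rw [hS]
    exact hmain.2 a ha hcube
end

section
/- Let q be odd and not divisible by 3, and let ρ, γ ∈ F_q^*. The cubic F(t) = t^3 - 3γt^2 - ρ over F_q has exactly one root in F_q if and only if 4γ^3 + ρ ≠ 0 and 1 + 4γ^3/ρ is a nonzero square in F_q when q ≡ -1 (mod 3), respectively a non-square when q ≡ 1 (mod 3). -/
open Finset



section helpers
variable {F : Type*} [Field F] [Fintype F]

lemma my_ne_zero_of_not_isSquare {a : F} (h : ¬ IsSquare a) : a ≠ 0 := by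
  rintro rfl; exact h ⟨0, by ring⟩

lemma sq_of_nonsq_mul_nonsq {a b : F} (ha : ¬ IsSquare a) (hb : ¬ IsSquare b) :
    IsSquare (a * b) := by
  classical
  have ha0 := my_ne_zero_of_not_isSquare ha
  have hb0 := my_ne_zero_of_not_isSquare hb
  have h1 : quadraticChar F a = -1 := quadraticChar_neg_one_iff_not_isSquare.mpr ha
  have h2 : quadraticChar F b = -1 := quadraticChar_neg_one_iff_not_isSquare.mpr hb
  refine (quadraticChar_one_iff_isSquare (mul_ne_zero ha0 hb0)).mp ?_
  rw [map_mul, h1, h2]; ring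

lemma cube_surj (h2 : (2:F) ≠ 0) (hns : ¬ IsSquare (-3 : F)) (b : F) :
    ∃ w : F, w ^ 3 = b := by
  have hinj : Function.Injective (fun x : F => x ^ 3) := by
    intro x y hxy
    simp only at hxy
    by_contra hne
    have hy0 : y ≠ 0 := by
      rintro rfl
      exact hne (by simpa [pow_eq_zero_iff] using hxy)
    set z := x / y with hz
    have hz3 : z ^ 3 = 1 := by
      rw [hz, div_pow, hxy, div_self (pow_ne_zero 3 hy0)]
    have hz1 : z ≠ 1 := by
      intro h
      apply hne
      have := (div_eq_one_iff_eq hy0).mp (hz ▸ h)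
      exact this
    have hquad : z ^ 2 + z + 1 = 0 := by
      have h0 : (z - 1) * (z ^ 2 + z + 1) = 0 := by linear_combination hz3
      rcases mul_eq_zero.mp h0 with h | h
      · exact absurd (sub_eq_zero.mp h) hz1
      · exact h
    exact hns ⟨2 * z + 1, by linear_combination (-4 : F) * hquad⟩
  have hsurj := Finite.surjective_of_injective hinj
  obtain ⟨w, hw⟩ := hsurj b
  exact ⟨w, hw⟩

end helpers


section helpers
set_option linter.unusedSectionVars false
set_option linter.unusedVariables false
variable {F : Type*} [Field F] [Fintype F]

lemma key_sigma (h3 : (3:F) ≠ 0) {σ : F} (hσ : σ ^ 2 = -3)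
    {a : F} (hns : ¬ IsSquare (a ^ 2 - 4)) : ∃ y : F, y ^ 3 - 3 * y = a := by
  classical
  have h9 : (9 : F) ≠ 0 := by
    intro h; exact h3 (by have : (3:F) * 3 = 0 := by rw [← h]; norm_num
                          rcases mul_eq_zero.mp this with h|h <;> exact h)
  set S : Finset F := univ.filter (fun x => ¬ IsSquare (x ^ 2 - 4)) with hS
  have hmap : ∀ x ∈ S, (x ^ 3 - 3 * x) ∈ S := by
    intro x hx
    simp only [hS, mem_filter, mem_univ, true_and] at hx ⊢
    have hx1 : x ^ 2 - 1 ≠ 0 := by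
      intro h
      exact hx ⟨σ, by linear_combination h - hσ⟩
    rintro ⟨s, hs⟩
    refine hx ⟨s / (x ^ 2 - 1), ?_⟩
    rw [div_mul_div_comm, eq_div_iff (mul_ne_zero hx1 hx1)]
    linear_combination hs
  have hinj : Set.InjOn (fun x : F => x ^ 3 - 3 * x) S := by
    intro y1 h1 y2 h2 he
    by_contra hne
    simp only at he
    have hk : y1 ^ 2 + y1 * y2 + y2 ^ 2 - 3 = 0 := by
      have h0 : (y1 - y2) * (y1 ^ 2 + y1 * y2 + y2 ^ 2 - 3) = 0 := by
        linear_combination he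
      rcases mul_eq_zero.mp h0 with h | h
      · exact absurd (sub_eq_zero.mp h) hne
      · exact h
    have hsq : 81 * ((y1 ^ 3 - 3 * y1) ^ 2 - 4)
        = (σ * ((y1 - y2) * (2 * y1 + y2) * (y1 + 2 * y2))) ^ 2 := by
      linear_combination (-((y1 - y2) * (2 * y1 + y2) * (y1 + 2 * y2)) ^ 2) * hσ
        + (93*y1^4 - 57*y1^3*y2 - 45*y1^2*y2^2 - 207*y1^2 + 24*y1*y2^3
            + 36*y1*y2 + 12*y2^4 + 36*y2^2 + 108) * hk
    have := (mem_filter.mp (hmap y1 h1)).2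
    refine this ⟨σ * ((y1 - y2) * (2 * y1 + y2) * (y1 + 2 * y2)) / 9, ?_⟩
    rw [div_mul_div_comm, eq_div_iff (mul_ne_zero h9 h9)]
    linear_combination hsq
  have himage : S.image (fun x => x ^ 3 - 3 * x) = S := by
    apply eq_of_subset_of_card_le
    · intro b hb
      obtain ⟨x, hx, rfl⟩ := mem_image.mp hb
      exact hmap x hx
    · rw [card_image_of_injOn hinj]
  have haS : a ∈ S := by simp [hS, hns]
  rw [← himage] at haS
  obtain ⟨y, _, hy⟩ := mem_image.mp haS
  exact ⟨y, hy⟩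

end helpers

section helpers
set_option linter.unusedSectionVars false
set_option linter.unusedVariables false
variable {F : Type*} [Field F] [Fintype F]

lemma unique_iff_of_root (h2 : (2:F) ≠ 0) (h3 : (3:F) ≠ 0) {ρ γ r : F}
    (hρ : ρ ≠ 0) (hγ : γ ≠ 0) (h4 : 4 * γ ^ 3 + ρ ≠ 0)
    (hr : r ^ 3 - 3 * γ * r ^ 2 - ρ = 0) :
    (∃! t : F, t ^ 3 - 3 * γ * t ^ 2 - ρ = 0) ↔
      ¬ IsSquare (-3 * (ρ * (4 * γ ^ 3 + ρ))) := by
  set b : F := r - 3 * γ with hb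
  set c : F := r ^ 2 - 3 * γ * r with hc
  have hfac : ∀ t : F, t ^ 3 - 3 * γ * t ^ 2 - ρ = (t - r) * (t ^ 2 + b * t + c) := by
    intro t
    rw [hb, hc]; linear_combination hr
  have hr0 : r ≠ 0 := by
    rintro rfl; apply hρ; linear_combination -hr
  have hr2γ : r ≠ 2 * γ := by
    rintro rfl; apply h4; linear_combination -hr
  have hgr : r ^ 2 + b * r + c ≠ 0 := by
    have : r ^ 2 + b * r + c = 3 * r * (r - 2 * γ) := by rw [hb, hc]; ring
    rw [this]
    exact mul_ne_zero (mul_ne_zero h3 hr0) (sub_ne_zero.mpr hr2γ)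
  have hDkey : (b ^ 2 - 4 * c) * (r ^ 2 + b * r + c) ^ 2
      = (3 : F) ^ 2 * (-3 * (ρ * (4 * γ ^ 3 + ρ))) := by
    rw [hb, hc]
    linear_combination (-27 * ρ - 27 * r ^ 3 + 81 * γ * r ^ 2 - 108 * γ ^ 3) * hr
  have hDiff : IsSquare (b ^ 2 - 4 * c) ↔ IsSquare (-3 * (ρ * (4 * γ ^ 3 + ρ))) := by
    constructor
    · rintro ⟨e, he⟩
      refine ⟨e * (r ^ 2 + b * r + c) / 3, ?_⟩
      rw [div_mul_div_comm, eq_div_iff (mul_ne_zero h3 h3)]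
      linear_combination (r ^ 2 + b * r + c) ^ 2 * he - hDkey
    · rintro ⟨e, he⟩
      refine ⟨3 * e / (r ^ 2 + b * r + c), ?_⟩
      rw [div_mul_div_comm, eq_div_iff (mul_ne_zero hgr hgr)]
      linear_combination (3:F) ^ 2 * he + hDkey
  rw [← hDiff]
  constructor
  · rintro ⟨t0, ht0, huniq⟩ ⟨e, he⟩
    -- quadratic has a root
    set t : F := (e - b) / 2 with ht
    have hgt : t ^ 2 + b * t + c = 0 := by
      rw [ht]
      field_simp
      linear_combination (-1 : F) * he
    have hft : t ^ 3 - 3 * γ * t ^ 2 - ρ = 0 := by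
      rw [hfac t, hgt, mul_zero]
    have h1 : t = t0 := huniq t hft
    have h2' : r = t0 := huniq r hr
    apply hgr
    rw [show r = t from h2'.trans h1.symm]
    exact hgt
  · intro hns
    refine ⟨r, hr, ?_⟩
    intro t ht
    by_contra hne
    have hgt : t ^ 2 + b * t + c = 0 := by
      rcases mul_eq_zero.mp ((hfac t) ▸ ht) with h | h
      · exact absurd (sub_eq_zero.mp h) hne
      · exact h
    apply hns
    refine ⟨2 * t + b, ?_⟩
    linear_combination -4 * hgt

lemma exists_root_aux (h2 : (2:F) ≠ 0) (h3 : (3:F) ≠ 0) {a : F}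
    (hns : ¬ IsSquare (-3 * (a ^ 2 - 4))) : ∃ y : F, y ^ 3 - 3 * y = a := by
  have ha : a ^ 2 - 4 ≠ 0 := by
    intro h
    exact hns (by rw [h, mul_zero]; exact ⟨0, by ring⟩)
  by_cases hsq : IsSquare (a ^ 2 - 4)
  · obtain ⟨s, hs⟩ := hsq
    have hns3 : ¬ IsSquare (-3 : F) := by
      rintro ⟨e, he⟩
      exact hns ⟨e * s, by rw [hs, he]; ring⟩
    have has : a + s ≠ 0 := by
      intro h
      have h4 : (4 : F) = 0 := by linear_combination -hs + (a - s) * h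
      exact h2 (by
        have : (2:F) * 2 = 0 := by linear_combination h4
        rcases mul_eq_zero.mp this with h' | h' <;> exact h')
    obtain ⟨w, hw⟩ := cube_surj h2 hns3 ((a + s) / 2)
    have hw3 : 2 * w ^ 3 = a + s := by
      rw [hw]; field_simp
    have hw0 : w ≠ 0 := by
      rintro rfl
      apply has
      linear_combination -hw3
    refine ⟨w + w⁻¹, ?_⟩
    have h6 : w ^ 6 - a * w ^ 3 + 1 = 0 := by
      have h1 : 4 * (w ^ 6 - a * w ^ 3 + 1) = (2 * w ^ 3 - a) ^ 2 - (a ^ 2 - 4) := by ring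
      have h2' : (2 * w ^ 3 - a) ^ 2 = s * s := by
        rw [← hs]; linear_combination (2 * w ^ 3 - a + s) * hw3 - hs
      have : 4 * (w ^ 6 - a * w ^ 3 + 1) = 0 := by
        rw [h1, h2', ← hs]; ring
      have h40 : (4 : F) ≠ 0 := by
        intro h; exact h2 (by
          have : (2:F) * 2 = 0 := by linear_combination h
          rcases mul_eq_zero.mp this with h' | h' <;> exact h')
      exact (mul_eq_zero.mp this).resolve_left h40
    have hiv : w * w⁻¹ = 1 := mul_inv_cancel₀ hw0
    have key : w ^ 3 * ((w + w⁻¹) ^ 3 - 3 * (w + w⁻¹)) = w ^ 3 * a := by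
      linear_combination h6 + (3 * w ^ 4 + 3 * w ^ 3 * w⁻¹ + w ^ 2 * w⁻¹ ^ 2
        + w * w⁻¹ + 1) * hiv
    exact mul_left_cancel₀ (pow_ne_zero 3 hw0) key
  · have hsg : IsSquare (-3 : F) := by
      by_contra hns3
      exact hns (sq_of_nonsq_mul_nonsq hns3 hsq)
    obtain ⟨σ0, hσ0⟩ := hsg
    exact key_sigma h3 (σ := σ0) (by rw [sq]; exact hσ0.symm) hsq

end helpers

section helpers
set_option linter.unusedSectionVars false
set_option linter.unusedVariables false
variable {F : Type*} [Field F] [Fintype F]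

lemma prime_dvd_card {p : ℕ} (hp : p.Prime) (h : (p : F) = 0) :
    p ∣ Fintype.card F := by
  haveI : CharP F (ringChar F) := ringChar.charP F
  have hdvd : ringChar F ∣ p := (CharP.cast_eq_zero_iff F (ringChar F) p).mp h
  have hrp : (ringChar F).Prime := CharP.char_is_prime F (ringChar F)
  have : ringChar F = p := ((Nat.prime_dvd_prime_iff_eq hrp hp).mp hdvd)
  obtain ⟨n, -, hcard⟩ := FiniteField.card F (ringChar F)
  rw [hcard, this]
  exact dvd_pow_self p n.ne_zero

lemma card_two_nz (hodd : Fintype.card F % 2 = 1) : (2 : F) ≠ 0 := by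
  intro h
  have := prime_dvd_card Nat.prime_two h
  omega

lemma card_three_nz (h3 : Fintype.card F % 3 ≠ 0) : (3 : F) ≠ 0 := by
  intro h
  have := prime_dvd_card Nat.prime_three h
  omega

lemma orderOf_three_unit {ω : F} (hq : ω ^ 2 + ω + 1 = 0) (h3 : (3 : F) ≠ 0) :
    3 ∣ Fintype.card F - 1 := by
  classical
  have hω0 : ω ≠ 0 := by rintro rfl; simp at hq
  have hω1 : ω ≠ 1 := by
    rintro rfl; apply h3; linear_combination hq
  have hω3 : ω ^ 3 = 1 := by linear_combination (ω - 1) * hq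
  set ωu : Fˣ := Units.mk0 ω hω0 with hωu
  have hu3 : ωu ^ 3 = 1 := by
    ext; push_cast [hωu]; exact hω3
  have hu1 : ωu ≠ 1 := by
    intro h; apply hω1
    have := congrArg Units.val h
    simpa [hωu] using this
  have hord : orderOf ωu = 3 := by
    have hdvd : orderOf ωu ∣ 3 := orderOf_dvd_of_pow_eq_one hu3
    rcases (Nat.prime_three.eq_one_or_self_of_dvd _ hdvd) with h | h
    · exact absurd (orderOf_eq_one_iff.mp h) hu1
    · exact h
  have := hord ▸ orderOf_dvd_card (x := ωu)
  rwa [Fintype.card_units] at this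

lemma isSquare_neg_three_of_mod (h1 : Fintype.card F % 3 = 1) : IsSquare (-3 : F) := by
  classical
  have hpos : 1 < Fintype.card F := Fintype.one_lt_card
  have hdvd : 3 ∣ Fintype.card Fˣ := by
    rw [Fintype.card_units]; omega
  obtain ⟨ωu, hω⟩ := exists_prime_orderOf_dvd_card 3 hdvd
  set ω : F := (ωu : F) with hωdef
  have hω3 : ω ^ 3 = 1 := by
    have : ωu ^ 3 = 1 := by rw [← hω]; exact pow_orderOf_eq_one ωu
    have := congrArg Units.val this
    push_cast at this
    exact this
  have hω1 : ω ≠ 1 := by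
    intro h
    have : ωu = 1 := Units.ext (by rw [← hωdef, h]; rfl)
    rw [this] at hω
    simp at hω
  have hq : ω ^ 2 + ω + 1 = 0 := by
    have h0 : (ω - 1) * (ω ^ 2 + ω + 1) = 0 := by linear_combination hω3
    rcases mul_eq_zero.mp h0 with h | h
    · exact absurd (sub_eq_zero.mp h) hω1
    · exact h
  exact ⟨2 * ω + 1, by linear_combination (-4 : F) * hq⟩

lemma not_isSquare_neg_three_of_mod (h2c : Fintype.card F % 3 = 2) (h2 : (2 : F) ≠ 0) (h3 : (3 : F) ≠ 0) :
    ¬ IsSquare (-3 : F) := by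
  rintro ⟨e, he⟩
  have hq : ((e - 1) / 2) ^ 2 + ((e - 1) / 2) + 1 = 0 := by
    field_simp
    linear_combination (-1 : F) * he
  have := orderOf_three_unit hq h3
  have hpos : 1 ≤ Fintype.card F := Fintype.card_pos
  omega

end helpers

section helpers
set_option linter.unusedSectionVars false
set_option linter.unusedVariables false
variable {F : Type*} [Field F] [Fintype F]

lemma core_iff (h2 : (2:F) ≠ 0) (h3 : (3:F) ≠ 0) {ρ γ : F} (hρ : ρ ≠ 0) (hγ : γ ≠ 0)
    (h4 : 4 * γ ^ 3 + ρ ≠ 0) :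
    (∃! t : F, t ^ 3 - 3 * γ * t ^ 2 - ρ = 0) ↔
      ¬ IsSquare (-3 * (ρ * (4 * γ ^ 3 + ρ))) := by
  constructor
  · intro hex
    obtain ⟨r, hr, -⟩ := id hex
    exact (unique_iff_of_root h2 h3 hρ hγ h4 hr).mp hex
  · intro hns
    have hγ3 : γ ^ 3 ≠ 0 := pow_ne_zero 3 hγ
    set a : F := ρ / γ ^ 3 + 2 with ha
    have ha3 : γ ^ 3 * a = ρ + 2 * γ ^ 3 := by
      rw [ha]; field_simp
    have haux : (γ ^ 3) ^ 2 * (a ^ 2 - 4) = ρ * (4 * γ ^ 3 + ρ) := by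
      rw [ha]; field_simp; ring
    clear_value a
    have hns' : ¬ IsSquare (-3 * (a ^ 2 - 4)) := by
      rintro ⟨f, hf⟩
      apply hns
      refine ⟨γ ^ 3 * f, ?_⟩
      linear_combination 3 * haux + (γ ^ 3) ^ 2 * hf
    obtain ⟨y, hy⟩ := exists_root_aux h2 h3 hns'
    have hr : (γ * (y + 1)) ^ 3 - 3 * γ * (γ * (y + 1)) ^ 2 - ρ = 0 := by
      linear_combination γ ^ 3 * hy + ha3
    exact (unique_iff_of_root h2 h3 hρ hγ h4 hr).mpr hns

end helpers



/-- Let `q` be odd, `gcd(q,3)=1`, and `ρ, γ ∈ F_q^*`. The cubic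
`t^3 - 3γt^2 - ρ` has exactly one root in `F_q` iff `4γ^3 + ρ ≠ 0` and
`1 + 4γ^3/ρ` is a nonzero square in `F_q` when `q ≡ -1 (mod 3)`, respectively a
non-square when `q ≡ 1 (mod 3)`. -/
theorem stmt10 {F : Type*} [Field F] [Fintype F]
    (hodd : Fintype.card F % 2 = 1)
    (ρ γ : F) (hρ : ρ ≠ 0) (hγ : γ ≠ 0) :
    (Fintype.card F % 3 = 2 →
      ((∃! t : F, t ^ 3 - 3 * γ * t ^ 2 - ρ = 0) ↔
        4 * γ ^ 3 + ρ ≠ 0 ∧ ∃ s : F, s ≠ 0 ∧ s ^ 2 = 1 + 4 * γ ^ 3 / ρ)) ∧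
    (Fintype.card F % 3 = 1 →
      ((∃! t : F, t ^ 3 - 3 * γ * t ^ 2 - ρ = 0) ↔
        4 * γ ^ 3 + ρ ≠ 0 ∧ ¬ ∃ s : F, s ^ 2 = 1 + 4 * γ ^ 3 / ρ)) := by
  have h2 : (2 : F) ≠ 0 := card_two_nz hodd
  have key_h4 : (∃! t : F, t ^ 3 - 3 * γ * t ^ 2 - ρ = 0) → (3:F) ≠ 0 →
      4 * γ ^ 3 + ρ ≠ 0 := by
    rintro ⟨t0, ht0, huniq⟩ h3 hz
    have e1 : (2 * γ) = t0 := huniq _ (by linear_combination -hz)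
    have e2 : (-γ) = t0 := huniq _ (by linear_combination -hz)
    have h3γ : (3 : F) * γ = 0 := by linear_combination e1 - e2
    rcases mul_eq_zero.mp h3γ with h | h
    · exact h3 h
    · exact hγ h
  constructor
  · intro hc2
    have h3 : (3 : F) ≠ 0 := card_three_nz (by omega)
    have hns3 : ¬ IsSquare (-3 : F) := not_isSquare_neg_three_of_mod hc2 h2 h3
    constructor
    · intro hex
      have h4 : 4 * γ ^ 3 + ρ ≠ 0 := key_h4 hex h3
      refine ⟨h4, ?_⟩
      have hns := (core_iff h2 h3 hρ hγ h4).mp hex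
      have hW : IsSquare (ρ * (4 * γ ^ 3 + ρ)) := by
        by_contra hW
        exact hns (sq_of_nonsq_mul_nonsq hns3 hW)
      obtain ⟨e, he⟩ := hW
      have he0 : e ≠ 0 := by
        rintro rfl
        exact (mul_ne_zero hρ h4) (by rw [he]; ring)
      refine ⟨e / ρ, div_ne_zero he0 hρ, ?_⟩
      field_simp
      linear_combination (-1 : F) * he
    · rintro ⟨h4, s, hs0, hs⟩
      have hW : ρ * (4 * γ ^ 3 + ρ) = (s * ρ) * (s * ρ) := by
        field_simp at hs
        linear_combination (-ρ) * hs
      have hsρ : s * ρ ≠ 0 := mul_ne_zero hs0 hρ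
      have hns : ¬ IsSquare (-3 * (ρ * (4 * γ ^ 3 + ρ))) := by
        rintro ⟨f, hf⟩
        apply hns3
        refine ⟨f / (s * ρ), ?_⟩
        rw [div_mul_div_comm, eq_div_iff (mul_ne_zero hsρ hsρ)]
        linear_combination hf + 3 * hW
      exact (core_iff h2 h3 hρ hγ h4).mpr hns
  · intro hc1
    have h3 : (3 : F) ≠ 0 := card_three_nz (by omega)
    obtain ⟨σ, hσ⟩ := isSquare_neg_three_of_mod (F := F) hc1
    have hσ0 : σ ≠ 0 := by
      rintro rfl
      apply h3
      have : (-3 : F) = 0 := by rw [hσ]; ring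
      linear_combination -this
    constructor
    · intro hex
      have h4 : 4 * γ ^ 3 + ρ ≠ 0 := key_h4 hex h3
      refine ⟨h4, ?_⟩
      rintro ⟨s, hs⟩
      have hns := (core_iff h2 h3 hρ hγ h4).mp hex
      have hW : ρ * (4 * γ ^ 3 + ρ) = (s * ρ) * (s * ρ) := by
        field_simp at hs
        linear_combination (-ρ) * hs
      apply hns
      refine ⟨σ * (s * ρ), ?_⟩
      linear_combination (s * ρ) ^ 2 * hσ - 3 * hW
    · rintro ⟨h4, hnos⟩
      have hns : ¬ IsSquare (-3 * (ρ * (4 * γ ^ 3 + ρ))) := by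
        rintro ⟨f, hf⟩
        apply hnos
        refine ⟨f / (σ * ρ), ?_⟩
        rw [div_pow, div_eq_iff (pow_ne_zero 2 (mul_ne_zero hσ0 hρ))]
        field_simp
        linear_combination -hf + ρ * (4 * γ ^ 3 + ρ) * hσ
      exact (core_iff h2 h3 hρ hγ h4).mpr hns
end

section
/- Let q be odd with q ≡ -1 (mod 3), and let ρ ∈ F_q^*. Then the number of γ ∈ F_q^* such that the cubic t^3 - 3γt^2 - ρ has exactly one root t in F_q equals (q-3)/2. -/
/-!
A root `t` of `t³ - 3γt² - ρ` is nonzero and determines `γ = (t³ - ρ) / (3t²)`. Dividing out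
`s - t` leaves the quadratic `t²s² + ρs + ρt` with discriminant `ρ(ρ - 4t³)`, and `t` is the only
root exactly when this discriminant is a nonsquare: otherwise both roots of the quadratic would
equal `t`, which forces `3ρ = 0`. So the `γ` in question correspond to the `t` with `t³ ≠ ρ` and
`ρ(ρ - 4t³)` a nonsquare. As `q ≡ 2 mod 3`, cubing is a bijection of `F_q`, hence so is
`t ↦ ρ(ρ - 4t³)`; it sends the excluded `t³ = ρ` to `-3ρ²`, a nonsquare since `-3` is one. This
leaves `(q - 1) / 2 - 1` values of `t`.
-/

section FiniteField

variable {F : Type*} [Field F] [Fintype F]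

theorem FiniteField.pow_three_injective (hq : Fintype.card F % 3 = 2) :
    Function.Injective fun x : F => x ^ 3 := by
  obtain ⟨k, hk⟩ : 3 ∣ 2 * Fintype.card F - 1 := by omega
  refine Function.LeftInverse.injective (g := fun y : F => y ^ k) fun x => ?_
  have hq1 : 1 ≤ Fintype.card F := Fintype.card_pos
  have hsplit : 2 * Fintype.card F - 1 = (Fintype.card F - 1) + Fintype.card F := by omega
  show (x ^ 3) ^ k = x
  rw [← pow_mul, ← hk, hsplit, pow_add, FiniteField.pow_card, ← pow_succ,
    Nat.sub_add_cancel hq1, FiniteField.pow_card]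

theorem FiniteField.natCast_ne_zero_of_coprime_card {n : ℕ} (h : n.Coprime (Fintype.card F)) :
    (n : F) ≠ 0 := fun hn =>
  CharP.ringChar_ne_one <| Nat.eq_one_of_dvd_coprimes h
    ((CharP.cast_eq_zero_iff F _ n).1 hn)
    ((CharP.cast_eq_zero_iff F _ _).1 (FiniteField.cast_card_eq_zero F))

theorem FiniteField.ncard_not_isSquare (hF : ringChar F ≠ 2) :
    {a : F | ¬IsSquare a}.ncard = (Fintype.card F - 1) / 2 := by
  classical
  have hχ (a : F) : quadraticChar F a =
      1 - 2 * (if ¬IsSquare a then 1 else 0) - if a = 0 then 1 else 0 := by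
    by_cases h0 : a = 0
    · simp [h0]
    by_cases hsq : IsSquare a
    · simp [h0, hsq, (quadraticChar_one_iff_isSquare h0).2 hsq]
    · simp [h0, hsq, quadraticChar_neg_one_iff_not_isSquare.2 hsq]
  have hsum := quadraticChar_sum_zero hF
  simp only [hχ, Finset.sum_sub_distrib, ← Finset.mul_sum, Finset.sum_ite_eq', Finset.mem_univ,
    if_true, Finset.sum_boole, Finset.sum_const, Finset.card_univ, nsmul_eq_mul, mul_one] at hsum
  rw [Set.ncard_eq_toFinset_card', Set.toFinset_ofPred]
  omega

end FiniteField

theorem not_isSquare_neg_three {F : Type*} [Field F] [NeZero (2 : F)] (h3 : (3 : F) ≠ 0)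
    (hcube : Function.Injective fun x : F => x ^ 3) : ¬IsSquare (-3 : F) := by
  rintro ⟨d, hd⟩
  -- `(d - 1) / 2` is a cube root of unity other than `1`.
  obtain ⟨ω, hω2⟩ : ∃ ω : F, ω * 2 = d - 1 := ⟨(d - 1) / 2, div_mul_cancel₀ _ two_ne_zero⟩
  have hcyc : ω ^ 2 + ω + 1 = 0 := by
    apply mul_left_cancel₀ (mul_ne_zero two_ne_zero two_ne_zero : (2 * 2 : F) ≠ 0)
    linear_combination (ω * 2 + d + 1) * hω2 - hd
  have hω1 : ω = 1 := hcube (by linear_combination (ω - 1) * hcyc)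
  exact h3 (by linear_combination (by simpa [hω1] using hcyc : (1 : F) + 1 + 1 = 0))

section Cubic

variable {F : Type*} [Field F] {ρ γ t : F}

theorem cubic_mul_sq_eq (ht : t ^ 3 - 3 * γ * t ^ 2 - ρ = 0) (s : F) :
    (s ^ 3 - 3 * γ * s ^ 2 - ρ) * t ^ 2 = (s - t) * (t ^ 2 * (s * s) + ρ * s + ρ * t) := by
  linear_combination s ^ 2 * ht

theorem cubic_eq_zero_iff (h3 : (3 : F) ≠ 0) (ht : t ≠ 0) :
    t ^ 3 - 3 * γ * t ^ 2 - ρ = 0 ↔ γ = (t ^ 3 - ρ) / (3 * t ^ 2) := by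
  rw [eq_div_iff (mul_ne_zero h3 (pow_ne_zero 2 ht))]
  constructor <;> intro h <;> linear_combination -h

theorem ne_zero_of_cubic_eq_zero (hρ : ρ ≠ 0) (ht : t ^ 3 - 3 * γ * t ^ 2 - ρ = 0) : t ≠ 0 := by
  rintro rfl
  exact hρ (by linear_combination -ht)

theorem cubic_root_unique_iff_not_isSquare_discrim [NeZero (2 : F)] (h3 : (3 : F) ≠ 0) (hρ : ρ ≠ 0)
    (ht : t ^ 3 - 3 * γ * t ^ 2 - ρ = 0) :
    (∀ s, s ^ 3 - 3 * γ * s ^ 2 - ρ = 0 → s = t) ↔ ¬IsSquare (discrim (t ^ 2) ρ (ρ * t)) := by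
  have ht0 := ne_zero_of_cubic_eq_zero hρ ht
  have hquad_cubic (s : F) (hs : t ^ 2 * (s * s) + ρ * s + ρ * t = 0) :
      s ^ 3 - 3 * γ * s ^ 2 - ρ = 0 := by
    simpa [ht0, hs] using cubic_mul_sq_eq ht s
  constructor
  · rintro huniq hsq
    obtain ⟨s, hs⟩ := exists_quadratic_eq_zero (pow_ne_zero 2 ht0) hsq
    have hunique : ∃! x, t ^ 2 * (x * x) + ρ * x + ρ * t = 0 :=
      ⟨s, hs, fun x hx => (huniq x (hquad_cubic x hx)).trans (huniq s (hquad_cubic s hs)).symm⟩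
    have hdisc := discrim_eq_zero_of_existsUnique (pow_ne_zero 2 ht0) hunique
    rw [huniq s (hquad_cubic s hs)] at hs
    have hvertex := discrim_eq_sq_of_quadratic_eq_zero hs
    rw [hdisc, eq_comm, sq_eq_zero_iff] at hvertex
    rw [discrim] at hdisc
    exact mul_ne_zero (mul_ne_zero h3 hρ) hρ (by linear_combination hdisc + 2 * ρ * hvertex)
  · intro hns s hs
    have hfac := cubic_mul_sq_eq ht s
    rw [hs, zero_mul, eq_comm, mul_eq_zero, sub_eq_zero] at hfac
    refine hfac.resolve_right fun hquad => hns ?_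
    exact ⟨_, (discrim_eq_sq_of_quadratic_eq_zero hquad).trans (sq _)⟩

end Cubic

section Count

variable {F : Type*} [Field F] {ρ : F}

theorem ncard_existsUnique_cubic_root [NeZero (2 : F)] (h3 : (3 : F) ≠ 0) (hρ : ρ ≠ 0) :
    {γ : F | γ ≠ 0 ∧ ∃! t : F, t ^ 3 - 3 * γ * t ^ 2 - ρ = 0}.ncard =
      {t : F | t ^ 3 ≠ ρ ∧ ¬IsSquare (discrim (t ^ 2) ρ (ρ * t))}.ncard := by
  have hT0 {t : F} (ht : ¬IsSquare (discrim (t ^ 2) ρ (ρ * t))) : t ≠ 0 := by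
    rintro rfl
    exact ht ⟨ρ, by simp [discrim, sq]⟩
  have hroot {t : F} (ht : t ≠ 0) :
      t ^ 3 - 3 * ((t ^ 3 - ρ) / (3 * t ^ 2)) * t ^ 2 - ρ = 0 :=
    (cubic_eq_zero_iff h3 ht).2 rfl
  symm
  refine Set.ncard_congr (fun t _ => (t ^ 3 - ρ) / (3 * t ^ 2)) ?_ ?_ ?_
  · rintro t ⟨hρt, hns⟩
    refine ⟨div_ne_zero (sub_ne_zero.2 hρt) (by simp [h3, hT0 hns]), t, hroot (hT0 hns), ?_⟩
    exact (cubic_root_unique_iff_not_isSquare_discrim h3 hρ (hroot (hT0 hns))).2 hns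
  · rintro a b ⟨-, ha⟩ ⟨-, hb⟩ hab
    refine ((cubic_root_unique_iff_not_isSquare_discrim h3 hρ (hroot (hT0 ha))).2 ha b ?_).symm
    simpa only [hab] using hroot (hT0 hb)
  · rintro γ ⟨hγ, t, ht, huniq⟩
    have ht0 := ne_zero_of_cubic_eq_zero hρ ht
    refine ⟨t, ⟨fun hρt => hγ ?_, ?_⟩, ((cubic_eq_zero_iff h3 ht0).1 ht).symm⟩
    · simpa [h3, ht0] using (show 3 * γ * t ^ 2 = 0 by linear_combination hρt - ht)
    · exact (cubic_root_unique_iff_not_isSquare_discrim h3 hρ ht).1 huniq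

theorem ncard_not_isSquare_discrim [Finite F] [NeZero (2 : F)] (hρ : ρ ≠ 0)
    (hcube : Function.Injective fun x : F => x ^ 3) (hns3 : ¬IsSquare (-3 : F)) :
    {t : F | t ^ 3 ≠ ρ ∧ ¬IsSquare (discrim (t ^ 2) ρ (ρ * t))}.ncard =
      {x : F | ¬IsSquare x}.ncard - 1 := by
  have h4ρ : (4 : F) * ρ ≠ 0 := mul_ne_zero (by exact_mod_cast pow_ne_zero 2 (two_ne_zero' F)) hρ
  have hdisc (t : F) : discrim (t ^ 2) ρ (ρ * t) = ρ ^ 2 - 4 * ρ * t ^ 3 := by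
    rw [discrim]; ring
  have hinj : Function.Injective fun t : F => discrim (t ^ 2) ρ (ρ * t) := fun a b hab =>
    hcube (mul_left_cancel₀ h4ρ (by simp only [hdisc] at hab; linear_combination -hab))
  have hset : {t : F | t ^ 3 ≠ ρ ∧ ¬IsSquare (discrim (t ^ 2) ρ (ρ * t))} =
      (fun t : F => discrim (t ^ 2) ρ (ρ * t)) ⁻¹' ({x | ¬IsSquare x} \ {-3 * ρ ^ 2}) := by
    ext t
    have : discrim (t ^ 2) ρ (ρ * t) = -3 * ρ ^ 2 ↔ t ^ 3 = ρ := by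
      rw [hdisc]
      constructor <;> intro h
      · exact mul_left_cancel₀ h4ρ (by linear_combination -h)
      · linear_combination (-4 * ρ) * h
    simp only [Set.mem_ofPred_eq, Set.mem_preimage, Set.mem_sdiff, Set.mem_singleton_iff, this]
    exact and_comm
  have hns : ¬IsSquare (-3 * ρ ^ 2) := fun h => hns3 <| by
    simpa only [mul_div_cancel_right₀ _ (pow_ne_zero 2 hρ)] using h.div (IsSquare.sq ρ)
  rw [hset, Set.ncard_preimage_of_injective_subset_range hinj
    (by simp [(Finite.injective_iff_surjective.1 hinj).range_eq]),
    Set.ncard_sdiff_singleton_of_mem hns]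

end Count

/-- Let `q` be odd with `q ≡ -1 (mod 3)` and `ρ ∈ F_q^*`. The number of
`γ ∈ F_q^*` such that the cubic `t^3 - 3γt^2 - ρ` has exactly one root in `F_q`
equals `(q-3)/2`. -/
theorem stmt11 {F : Type*} [Field F] [Fintype F]
    (hodd : Fintype.card F % 2 = 1) (hq : Fintype.card F % 3 = 2)
    (ρ : F) (hρ : ρ ≠ 0) :
    Set.ncard {γ : F | γ ≠ 0 ∧ ∃! t : F, t ^ 3 - 3 * γ * t ^ 2 - ρ = 0} =
      (Fintype.card F - 3) / 2 := by
  have hchar : ringChar F ≠ 2 := by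
    rw [Ne, FiniteField.even_card_iff_char_two]
    omega
  have : NeZero (2 : F) := ⟨Ring.two_ne_zero hchar⟩
  have h3 : (3 : F) ≠ 0 := by
    exact_mod_cast FiniteField.natCast_ne_zero_of_coprime_card
      (Nat.prime_three.coprime_iff_not_dvd.2 (by omega))
  have hcube := FiniteField.pow_three_injective hq
  rw [ncard_existsUnique_cubic_root h3 hρ,
    ncard_not_isSquare_discrim hρ hcube (not_isSquare_neg_three h3 hcube),
    FiniteField.ncard_not_isSquare hchar]
  omega
end
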